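/- arXiv:math/0010234 — 5 statements merged into one kernel-verified Lean document; each statement's English description precedes it below -/
import Mathlib

section
/- A compact Hausdorff space X is hereditarily indecomposable if and only if for every pair of disjoint nonempty closed subsets C and D of X and for every pair of open sets U ⊇ C and V ⊇ D, the triple (X, C, D) is crooked between U and V; that is, X can be written as X = X₀ ∪ X₁ ∪ X₂ with each Xᵢ closed, C ⊆ X₀, X₀ ∩ X₁ ⊆ V, X₀ ∩ X₂ = ∅, X₁ ∩ X₂ ⊆ U, and D ⊆ X₂. -/
open Set

/-- A space is *hereditarily indecomposable* if whenever two subcontinua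
(nonempty compact connected subsets) intersect, one is contained in the other. -/
def HereditarilyIndecomposable (X : Type*) [TopologicalSpace X] : Prop :=
  ∀ C D : Set X, IsCompact C → IsConnected C → IsCompact D → IsConnected D →
    (C ∩ D).Nonempty → C ⊆ D ∨ D ⊆ C

section Aux

variable {Y : Type*} [TopologicalSpace Y]

/-- Clopen approximation of connected components in compact Hausdorff spaces. -/
lemma exists_isClopen_mem_subset [CompactSpace Y] [T2Space Y] {x : Y} {O : Set Y}
    (hO : IsOpen O) (h : connectedComponent x ⊆ O) :
    ∃ Z : Set Y, IsClopen Z ∧ x ∈ Z ∧ Z ⊆ O := by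
  have hempty : Oᶜ ∩ ⋂ s : { s : Set Y // IsClopen s ∧ x ∈ s }, (s : Set Y) = ∅ := by
    rw [← connectedComponent_eq_iInter_isClopen, eq_empty_iff_forall_notMem]
    rintro z ⟨hz1, hz2⟩
    exact hz1 (h hz2)
  obtain ⟨t, ht⟩ := hO.isClosed_compl.isCompact.elim_finite_subfamily_closed
      (fun s : { s : Set Y // IsClopen s ∧ x ∈ s } => (s : Set Y))
      (fun s => s.2.1.1) hempty
  refine ⟨⋂ s ∈ t, (s : Set Y), isClopen_biInter_finset fun s _ => s.2.1,
    mem_iInter₂.2 fun s _ => s.2.2, ?_⟩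
  intro z hz
  by_contra hzO
  exact absurd ht (Set.Nonempty.ne_empty ⟨z, hzO, hz⟩)

/-- In a compact Hausdorff space, the union of the connected components of the points
of a closed set is closed. -/
lemma isClosed_biUnion_connectedComponent [CompactSpace Y] [T2Space Y] {D : Set Y}
    (hD : IsClosed D) : IsClosed (⋃ d ∈ D, connectedComponent d) := by
  rw [← isOpen_compl_iff, isOpen_iff_forall_mem_open]
  intro y hy
  have hyD : connectedComponent y ⊆ Dᶜ := by
    intro d hd hdD
    exact hy (mem_biUnion hdD ((connectedComponent_eq hd) ▸ mem_connectedComponent))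
  obtain ⟨Z, hZclopen, hyZ, hZsub⟩ := exists_isClopen_mem_subset hD.isOpen_compl hyD
  refine ⟨Z, ?_, hZclopen.isOpen, hyZ⟩
  intro z hz hzU
  simp only [mem_iUnion, exists_prop] at hzU
  obtain ⟨d, hdD, hzd⟩ := hzU
  have h1 : connectedComponent z ⊆ Z :=
    isPreconnected_connectedComponent.subset_isClopen hZclopen ⟨z, mem_connectedComponent, hz⟩
  have h2 : d ∈ connectedComponent z := (connectedComponent_eq hzd) ▸ mem_connectedComponent
  exact hZsub (h1 h2) hdD

/-- The key construction: a closed set `A ⊇ C` avoiding `M`, whose frontier lies in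
`closure G`, built from clopen subsets of the complement of `G`. -/
lemma exists_closed_piece {X : Type*} [TopologicalSpace X] [CompactSpace X] [T2Space X]
    {C M G : Set X} (hC : IsClosed C) (hG : IsOpen G) (hCG : Disjoint C G)
    (hM : IsClosed M)
    (hcomp : ∀ y : (Gᶜ : Set X), (y : X) ∈ C →
      Disjoint (Subtype.val '' connectedComponent y) M) :
    ∃ A : Set X, IsClosed A ∧ C ⊆ A ∧ Disjoint A M ∧
      ∀ x ∈ A ∩ closure Aᶜ, x ∈ closure G := by
  have hGc : IsClosed (Gᶜ : Set X) := hG.isClosed_compl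
  haveI : CompactSpace (Gᶜ : Set X) := isCompact_iff_compactSpace.mp hGc.isCompact
  have step : ∀ y : (Gᶜ : Set X), (y : X) ∈ C →
      ∃ Z : Set (Gᶜ : Set X), IsClopen Z ∧ y ∈ Z ∧ Z ⊆ Subtype.val ⁻¹' Mᶜ := by
    intro y hy
    apply exists_isClopen_mem_subset (hM.isOpen_compl.preimage continuous_subtype_val)
    intro z hz
    simp only [mem_preimage, mem_compl_iff]
    intro hzM
    exact Set.disjoint_left.mp (hcomp y hy) ⟨z, hz, rfl⟩ hzM
  choose Z hZclopen hZmem hZsub using step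
  set ι := { y : (Gᶜ : Set X) // (y : X) ∈ C } with hι
  have hCptC' : IsCompact (Subtype.val ⁻¹' C : Set (Gᶜ : Set X)) :=
    (hC.preimage continuous_subtype_val).isCompact
  have hcover : (Subtype.val ⁻¹' C : Set (Gᶜ : Set X)) ⊆ ⋃ i : ι, Z i i.2 := by
    intro y hy
    exact mem_iUnion.2 ⟨⟨y, hy⟩, hZmem y hy⟩
  obtain ⟨t, ht⟩ := hCptC'.elim_finite_subcover (fun i : ι => Z i i.2)
    (fun i => (hZclopen i i.2).isOpen) hcover
  set A' : Set (Gᶜ : Set X) := ⋃ i ∈ t, Z i i.2 with hA'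
  have hA'clopen : IsClopen A' := isClopen_biUnion_finset fun i _ => hZclopen i i.2
  refine ⟨Subtype.val '' A', ?_, ?_, ?_, ?_⟩
  · exact ((hA'clopen.isClosed.isCompact).image continuous_subtype_val).isClosed
  · intro c hc
    have hcG : c ∈ (Gᶜ : Set X) := fun hcg => hCG.le_bot ⟨hc, hcg⟩
    exact ⟨⟨c, hcG⟩, ht hc, rfl⟩
  · rw [disjoint_left]
    rintro x ⟨z, hz, rfl⟩ hxM
    rw [hA'] at hz
    simp only [mem_iUnion, exists_prop] at hz
    obtain ⟨i, _, hzi⟩ := hz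
    exact (hZsub i i.2 hzi) hxM
  · obtain ⟨W, hWopen, hWA'⟩ := isOpen_induced_iff.mp hA'clopen.isOpen
    have hAeq : Subtype.val '' A' = Gᶜ ∩ W := by
      rw [← hWA', Subtype.image_preimage_coe]
    rintro x ⟨hxA, hxcl⟩ 
    by_contra hxG
    have hxW : x ∈ W := (hAeq ▸ hxA).2
    have hN : IsOpen (W ∩ (closure G)ᶜ) := hWopen.inter isClosed_closure.isOpen_compl
    have hNsub : W ∩ (closure G)ᶜ ⊆ Subtype.val '' A' := by
      intro n hn
      rw [hAeq]
      exact ⟨fun hnG => hn.2 (subset_closure hnG), hn.1⟩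
    obtain ⟨n, hn1, hn2⟩ := mem_closure_iff.mp hxcl _ hN ⟨hxW, hxG⟩
    exact hn2 (hNsub hn1)

end Aux

/-- Krasinkiewicz–Minc: a compact Hausdorff space is hereditarily indecomposable iff
it is crooked between every pair of disjoint nonempty closed sets. -/
theorem hereditarilyIndecomposable_iff_crooked
    (X : Type*) [TopologicalSpace X] [CompactSpace X] [T2Space X] :
    HereditarilyIndecomposable X ↔
      ∀ C D : Set X, IsClosed C → IsClosed D → C.Nonempty → D.Nonempty → Disjoint C D →
        ∀ U V : Set X, IsOpen U → IsOpen V → C ⊆ U → D ⊆ V →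
          ∃ X₀ X₁ X₂ : Set X, IsClosed X₀ ∧ IsClosed X₁ ∧ IsClosed X₂ ∧
            X₀ ∪ X₁ ∪ X₂ = univ ∧ C ⊆ X₀ ∧ X₀ ∩ X₁ ⊆ V ∧ X₀ ∩ X₂ = ∅ ∧
            X₁ ∩ X₂ ⊆ U ∧ D ⊆ X₂ := by
  constructor
  · -- hard direction
    intro hHI C D hCcl hDcl _ _ hCD U V hU hV hCU hDV
    obtain ⟨P, Q, hP, hQ, hCP, hDQ, hPQ⟩ := normal_separation hCcl hDcl hCD
    obtain ⟨U₁, hU₁o, hCU₁, hU₁cl⟩ :=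
      normal_exists_closure_subset hCcl (hU.inter hP) (subset_inter hCU hCP)
    obtain ⟨V₁, hV₁o, hDV₁, hV₁cl⟩ :=
      normal_exists_closure_subset hDcl (hV.inter hQ) (subset_inter hDV hDQ)
    have hclUV : Disjoint (closure U₁) (closure V₁) :=
      hPQ.mono (hU₁cl.trans inter_subset_right) (hV₁cl.trans inter_subset_right)
    have hCV₁ : Disjoint C V₁ :=
      hclUV.mono (hCU₁.trans subset_closure) subset_closure
    have hDU₁ : Disjoint D U₁ :=
      (hclUV.symm).mono (hDV₁.trans subset_closure) subset_closure
    haveI : CompactSpace (U₁ᶜ : Set X) :=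
      isCompact_iff_compactSpace.mp hU₁o.isClosed_compl.isCompact
    haveI : CompactSpace (V₁ᶜ : Set X) :=
      isCompact_iff_compactSpace.mp hV₁o.isClosed_compl.isCompact
    set K₂' : Set (U₁ᶜ : Set X) := ⋃ d ∈ (Subtype.val ⁻¹' D), connectedComponent d with hK₂'
    have hK₂'cl : IsClosed K₂' :=
      isClosed_biUnion_connectedComponent (hDcl.preimage continuous_subtype_val)
    set K₂ : Set X := Subtype.val '' K₂' with hK₂
    have hK₂cpt : IsCompact K₂ := (hK₂'cl.isCompact).image continuous_subtype_val
    -- the key use of hereditary indecomposability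
    have hkey : ∀ y : (V₁ᶜ : Set X), (y : X) ∈ C →
        Disjoint (Subtype.val '' connectedComponent y) K₂ := by
      intro y hy
      rw [disjoint_left]
      rintro x ⟨z, hz, rfl⟩ hxK
      obtain ⟨w, hw, hwx⟩ := hxK
      rw [hK₂'] at hw
      simp only [mem_iUnion, exists_prop] at hw
      obtain ⟨d, hdD, hwd⟩ := hw
      set Qs : Set X := Subtype.val '' connectedComponent y with hQs
      set Rs : Set X := Subtype.val '' connectedComponent d with hRs
      have hQcpt : IsCompact Qs :=
        (isClosed_connectedComponent.isCompact).image continuous_subtype_val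
      have hRcpt : IsCompact Rs :=
        (isClosed_connectedComponent.isCompact).image continuous_subtype_val
      have hQconn : IsConnected Qs :=
        isConnected_connectedComponent.image _ continuous_subtype_val.continuousOn
      have hRconn : IsConnected Rs :=
        isConnected_connectedComponent.image _ continuous_subtype_val.continuousOn
      have hxQ : (z : X) ∈ Qs := ⟨z, hz, rfl⟩
      have hxR : (z : X) ∈ Rs := ⟨w, hwd, hwx⟩
      have hyQ : (y : X) ∈ Qs := ⟨y, mem_connectedComponent, rfl⟩
      have hdR : (d : X) ∈ Rs := ⟨d, mem_connectedComponent, rfl⟩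
      rcases hHI Qs Rs hQcpt hQconn hRcpt hRconn ⟨(z : X), hxQ, hxR⟩ with hQR | hRQ
      · have : (y : X) ∈ (U₁ᶜ : Set X) := by
          have := hQR hyQ
          rw [hRs] at this
          obtain ⟨u, _, hu⟩ := this
          exact hu ▸ u.2
        exact this (hCU₁ hy)
      · have : (d : X) ∈ (V₁ᶜ : Set X) := by
          have := hRQ hdR
          rw [hQs] at this
          obtain ⟨u, _, hu⟩ := this
          exact hu ▸ u.2
        exact this (hDV₁ hdD)
    obtain ⟨A, hAcl, hCA, hAK₂, hAfr⟩ :=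
      exists_closed_piece hCcl hV₁o hCV₁ hK₂cpt.isClosed hkey
    have hkey₂ : ∀ y : (U₁ᶜ : Set X), (y : X) ∈ D →
        Disjoint (Subtype.val '' connectedComponent y) A := by
      intro y hy
      have hsub' : connectedComponent y ⊆ K₂' := by
        rw [hK₂']
        exact subset_biUnion_of_mem (u := fun d => connectedComponent d)
          (mem_preimage.mpr hy)
      have hsub : Subtype.val '' connectedComponent y ⊆ K₂ := image_mono hsub'
      exact (hAK₂.symm).mono_left hsub
    obtain ⟨B, hBcl, hDB, hBA, hBfr⟩ :=
      exists_closed_piece hDcl hU₁o hDU₁ hAcl hkey₂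
    refine ⟨A, closure (A ∪ B)ᶜ, B, hAcl, isClosed_closure, hBcl, ?_, hCA, ?_, ?_, ?_, hDB⟩
    · apply eq_univ_iff_forall.mpr
      intro x
      by_cases hx : x ∈ A ∪ B
      · rcases hx with h | h
        · exact Or.inl (Or.inl h)
        · exact Or.inr h
      · exact Or.inl (Or.inr (subset_closure hx))
    · rintro x ⟨hxA, hxcl⟩
      have : x ∈ closure Aᶜ := closure_mono (compl_subset_compl.mpr subset_union_left) hxcl
      exact (hV₁cl (hAfr x ⟨hxA, this⟩)).1
    · rw [← disjoint_iff_inter_eq_empty]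
      exact hBA.symm
    · rintro x ⟨hxcl, hxB⟩
      have : x ∈ closure Bᶜ := closure_mono (compl_subset_compl.mpr subset_union_right) hxcl
      exact (hU₁cl (hBfr x ⟨hxB, this⟩)).1
  · -- easy direction
    intro h C D hCcpt hCconn hDcpt hDconn hCDne
    by_contra hcon
    push_neg at hcon
    obtain ⟨hnCD, hnDC⟩ := hcon
    obtain ⟨c, hcC, hcD⟩ := not_subset.mp hnCD
    obtain ⟨d, hdD, hdC⟩ := not_subset.mp hnDC
    have hcd : Disjoint ({c} : Set X) ({d} : Set X) := by
      simp only [disjoint_singleton]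
      rintro rfl
      exact hcD hdD
    obtain ⟨X₀, X₁, X₂, hX₀, hX₁, hX₂, hunion, hcX₀, h01, h02, h12, hdX₂⟩ :=
      h {c} {d} isClosed_singleton isClosed_singleton (singleton_nonempty c)
        (singleton_nonempty d) hcd Dᶜ Cᶜ hDcpt.isClosed.isOpen_compl
        hCcpt.isClosed.isOpen_compl (singleton_subset_iff.mpr hcD)
        (singleton_subset_iff.mpr hdC)
    have hCsub : C ⊆ X₀ ∪ (X₁ ∪ X₂) := by
      rw [← union_assoc, hunion]; exact subset_univ C
    have hC0 : C ⊆ X₀ := by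
      by_contra hnot
      obtain ⟨p, hpC, hpX₀⟩ := not_subset.mp hnot
      have hp12 : p ∈ X₁ ∪ X₂ := (hCsub hpC).resolve_left hpX₀
      obtain ⟨q, hqC, hqX₀, hq12⟩ :=
        isPreconnected_closed_iff.mp hCconn.isPreconnected X₀ (X₁ ∪ X₂) hX₀ (hX₁.union hX₂)
          hCsub ⟨c, hcC, singleton_subset_iff.mp hcX₀⟩ ⟨p, hpC, hp12⟩
      rcases hq12 with hq1 | hq2
      · exact (h01 ⟨hqX₀, hq1⟩) hqC
      · exact absurd (h02 ▸ (⟨hqX₀, hq2⟩ : q ∈ X₀ ∩ X₂) : q ∈ (∅ : Set X)) (notMem_empty q)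
    have hDsub : D ⊆ X₂ ∪ (X₀ ∪ X₁) := by
      intro x _
      have : x ∈ X₀ ∪ X₁ ∪ X₂ := hunion ▸ mem_univ x
      rcases this with h | h
      · exact Or.inr h
      · exact Or.inl h
    have hD2 : D ⊆ X₂ := by
      by_contra hnot
      obtain ⟨p, hpD, hpX₂⟩ := not_subset.mp hnot
      have hp01 : p ∈ X₀ ∪ X₁ := (hDsub hpD).resolve_left hpX₂
      obtain ⟨q, hqD, hqX₂, hq01⟩ :=
        isPreconnected_closed_iff.mp hDconn.isPreconnected X₂ (X₀ ∪ X₁) hX₂ (hX₀.union hX₁)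
          hDsub ⟨d, hdD, singleton_subset_iff.mp hdX₂⟩ ⟨p, hpD, hp01⟩
      rcases hq01 with hq0 | hq1
      · exact absurd (h02 ▸ (⟨hq0, hqX₂⟩ : q ∈ X₀ ∩ X₂) : q ∈ (∅ : Set X)) (notMem_empty q)
      · exact (h12 ⟨hq1, hqX₂⟩) hqD
    obtain ⟨p, hpC, hpD⟩ := hCDne
    exact absurd (h02 ▸ (⟨hC0 hpC, hD2 hpD⟩ : p ∈ X₀ ∩ X₂) : p ∈ (∅ : Set X)) (notMem_empty p)
end

section
/- Let X be a metrizable continuum and let F₀ and F₁ be disjoint closed subsets of X. Then there exist disjoint open sets W₀ ⊇ F₀ and W₁ ⊇ F₁ such that the set X ∖ (W₀ ∪ W₁) is hereditarily indecomposable. -/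
open Set

noncomputable section BingSquare

/-- lower fold value -/
def mmB (y : ℝ) : ℝ := max (min (24*y) (9 - 48*y)) (max (-3) (8*y - 10))
/-- upper fold value -/
def MMB (y : ℝ) : ℝ := min (min (24*y) 3) (max (39 - 48*y) (8*y - 10))
/-- fold position -/
def bbB (y : ℝ) : ℝ := -1 + (MMB y - mmB y)/3
/-- clamp to [0,1] -/
def cl01 (x : ℝ) : ℝ := max 0 (min 1 x)
/-- the profile on one period cell, `s ∈ [-1, 2]` -/
def PcellB (y s : ℝ) : ℝ :=
  if s ≤ bbB y then MMB y - 3*(s+1) else mmB y + (s - bbB y)*(3*(bbB y)+6)/(2 - bbB y)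
/-- the crooked map on the strip -/
def LamB (x σ : ℝ) : ℝ := 3*(⌊(σ+1)/3⌋ : ℤ) + PcellB (cl01 x) (σ - 3*(⌊(σ+1)/3⌋ : ℤ))
/-- level curves of the crooked map -/
def CurveB (x v : ℝ) (j : ℤ) : ℝ :=
  3*j + bbB (cl01 x) + (v - 3*j - mmB (cl01 x))*(2 - bbB (cl01 x))/(3*(bbB (cl01 x))+6)

lemma cl01_mem (x : ℝ) : cl01 x ∈ Icc (0:ℝ) 1 := by
  constructor
  · exact le_max_left _ _
  · apply max_le (by norm_num)
    exact min_le_left _ _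

lemma cl01_of_mem {x : ℝ} (h0 : 0 ≤ x) (h1 : x ≤ 1) : cl01 x = x := by
  unfold cl01
  rw [min_eq_right h1, max_eq_right h0]

lemma cl01_cont : Continuous cl01 := by
  unfold cl01; fun_prop

lemma mmB_cont : Continuous mmB := by unfold mmB; fun_prop
lemma MMB_cont : Continuous MMB := by unfold MMB; fun_prop
lemma bbB_cont : Continuous bbB := by
  unfold bbB
  exact continuous_const.add ((MMB_cont.sub mmB_cont).div_const 3)

/-- region values -/
lemma regB1 {y : ℝ} (h0 : 0 ≤ y) (h : y ≤ 1/8) : mmB y = 24*y ∧ MMB y = 24*y := by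
  have hm1 : min (24*y) (9 - 48*y) = 24*y := min_eq_left (by linarith)
  have hx1 : max (-3 : ℝ) (8*y - 10) = -3 := max_eq_left (by linarith)
  have hx2 : max (39 - 48*y) (8*y - 10) = 39 - 48*y := max_eq_left (by linarith)
  have hm2 : min (24*y) (3:ℝ) = 24*y := min_eq_left (by linarith)
  constructor
  · unfold mmB; rw [hm1, hx1]; exact max_eq_left (by linarith)
  · unfold MMB; rw [hm2, hx2]; exact min_eq_left (by linarith)

lemma regB2 {y : ℝ} (h0 : 1/8 ≤ y) (h : y ≤ 1/4) : mmB y = 9 - 48*y ∧ MMB y = 3 := by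
  have hm1 : min (24*y) (9 - 48*y) = 9 - 48*y := min_eq_right (by linarith)
  have hx1 : max (-3 : ℝ) (8*y - 10) = -3 := max_eq_left (by linarith)
  have hx2 : max (39 - 48*y) (8*y - 10) = 39 - 48*y := max_eq_left (by linarith)
  have hm2 : min (24*y) (3:ℝ) = 3 := min_eq_right (by linarith)
  constructor
  · unfold mmB; rw [hm1, hx1]; exact max_eq_left (by linarith)
  · unfold MMB; rw [hm2, hx2]; exact min_eq_left (by linarith)

lemma regB3 {y : ℝ} (h0 : 1/4 ≤ y) (h : y ≤ 3/4) : mmB y = -3 ∧ MMB y = 3 := by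
  have hm1 : min (24*y) (9 - 48*y) = 9 - 48*y := min_eq_right (by linarith)
  have hx1 : max (-3 : ℝ) (8*y - 10) = -3 := max_eq_left (by linarith)
  have hx2 : max (39 - 48*y) (8*y - 10) = 39 - 48*y := max_eq_left (by linarith)
  have hm2 : min (24*y) (3:ℝ) = 3 := min_eq_right (by linarith)
  constructor
  · unfold mmB; rw [hm1, hx1]; exact max_eq_right (by linarith)
  · unfold MMB; rw [hm2, hx2]; exact min_eq_left (by linarith)

lemma regB4 {y : ℝ} (h0 : 3/4 ≤ y) (h : y ≤ 7/8) : mmB y = -3 ∧ MMB y = 39 - 48*y := by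
  have hm1 : min (24*y) (9 - 48*y) = 9 - 48*y := min_eq_right (by linarith)
  have hx1 : max (-3 : ℝ) (8*y - 10) = -3 := max_eq_left (by linarith)
  have hx2 : max (39 - 48*y) (8*y - 10) = 39 - 48*y := max_eq_left (by linarith)
  have hm2 : min (24*y) (3:ℝ) = 3 := min_eq_right (by linarith)
  constructor
  · unfold mmB; rw [hm1, hx1]; exact max_eq_right (by linarith)
  · unfold MMB; rw [hm2, hx2]; exact min_eq_right (by linarith)

lemma regB5 {y : ℝ} (h0 : 7/8 ≤ y) (h : y ≤ 1) : mmB y = 8*y - 10 ∧ MMB y = 8*y - 10 := by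
  have hm1 : min (24*y) (9 - 48*y) = 9 - 48*y := min_eq_right (by linarith)
  have hx1 : max (-3 : ℝ) (8*y - 10) = 8*y - 10 := max_eq_right (by linarith)
  have hx2 : max (39 - 48*y) (8*y - 10) = 8*y - 10 := max_eq_right (by linarith)
  have hm2 : min (24*y) (3:ℝ) = 3 := min_eq_right (by linarith)
  constructor
  · unfold mmB; rw [hm1, hx1]; exact max_eq_right (by linarith)
  · unfold MMB; rw [hm2, hx2]; exact min_eq_right (by linarith)

/-- basic bounds on the fold data, for `y ∈ [0,1]`. -/
lemma square_facts {y : ℝ} (h0 : 0 ≤ y) (h1 : y ≤ 1) :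
    -3 ≤ mmB y ∧ mmB y ≤ 3 ∧ -3 ≤ MMB y ∧ MMB y ≤ 3 ∧ mmB y ≤ MMB y ∧ MMB y ≤ mmB y + 6 := by
  rcases le_total y (1/8) with h|h
  · obtain ⟨e1, e2⟩ := regB1 h0 h; rw [e1, e2]
    exact ⟨by linarith, by linarith, by linarith, by linarith, le_refl _, by linarith⟩
  rcases le_total y (1/4) with h'|h'
  · obtain ⟨e1, e2⟩ := regB2 h h'; rw [e1, e2]
    exact ⟨by linarith, by linarith, by linarith, by linarith, by linarith, by linarith⟩
  rcases le_total y (3/4) with h''|h''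
  · obtain ⟨e1, e2⟩ := regB3 h' h''; rw [e1, e2]
    exact ⟨by linarith, by linarith, by linarith, by linarith, by linarith, by linarith⟩
  rcases le_total y (7/8) with h3|h3
  · obtain ⟨e1, e2⟩ := regB4 h'' h3; rw [e1, e2]
    exact ⟨by linarith, by linarith, by linarith, by linarith, by linarith, by linarith⟩
  · obtain ⟨e1, e2⟩ := regB5 h3 h1; rw [e1, e2]
    exact ⟨by linarith, by linarith, by linarith, by linarith, le_refl _, by linarith⟩

lemma bbB_mem {y : ℝ} (h0 : 0 ≤ y) (h1 : y ≤ 1) : -1 ≤ bbB y ∧ bbB y ≤ 1 := by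
  obtain ⟨_, _, _, _, h5, h6⟩ := square_facts h0 h1
  unfold bbB; constructor <;> [linarith; linarith]

/-- key identity: the fall run ends at the min value. -/
lemma fold_identity (y : ℝ) : MMB y - 3*(bbB y + 1) = mmB y := by
  unfold bbB; ring

end BingSquare

noncomputable section BingSquare2

lemma floor_shift {j : ℤ} {w : ℝ} (h1 : -1 ≤ w) (h2 : w < 2) :
    (⌊(3*(j:ℝ) + w + 1)/3⌋ : ℤ) = j := by
  have he : (3*(j:ℝ) + w + 1)/3 = (w+1)/3 + (j:ℝ) := by ring
  rw [he, Int.floor_add_intCast, Int.floor_eq_zero_iff.mpr ⟨by linarith, by linarith⟩, zero_add]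

lemma cell_bounds (σ : ℝ) :
    -1 ≤ σ - 3*(⌊(σ+1)/3⌋ : ℤ) ∧ σ - 3*(⌊(σ+1)/3⌋ : ℤ) < 2 := by
  have h1 : ((⌊(σ+1)/3⌋ : ℤ) : ℝ) ≤ (σ+1)/3 := Int.floor_le _
  have h2 : (σ+1)/3 < (⌊(σ+1)/3⌋ : ℤ) + 1 := Int.lt_floor_add_one _
  constructor <;> [linarith; linarith]

lemma LamB_eval (x : ℝ) {j : ℤ} {w : ℝ} (h1 : -1 ≤ w) (h2 : w < 2) :
    LamB x (3*(j:ℝ) + w) = 3*(j:ℝ) + PcellB (cl01 x) w := by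
  unfold LamB
  rw [floor_shift h1 h2]
  have he : 3*(j:ℝ) + w - 3*(j:ℤ) = w := by push_cast; ring
  rw [he]

/-- On straight regions, `LamB` is the straight line. -/
lemma LamB_line {x : ℝ} (hMm : MMB (cl01 x) = mmB (cl01 x)) (σ : ℝ) :
    LamB x σ = σ + 1 + mmB (cl01 x) := by
  have hbb : bbB (cl01 x) = -1 := by unfold bbB; rw [hMm]; ring
  obtain ⟨hs1, hs2⟩ := cell_bounds σ
  unfold LamB PcellB
  rw [hbb, hMm]
  rcases le_or_gt (σ - 3*(⌊(σ+1)/3⌋ : ℤ)) (-1) with h|h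
  · rw [if_pos h]
    have : σ - 3*((⌊(σ+1)/3⌋ : ℤ):ℝ) = -1 := le_antisymm h hs1
    linarith
  · rw [if_neg (by linarith)]
    have h3 : (σ - 3*((⌊(σ+1)/3⌋ : ℤ):ℝ) - -1) * (3*(-1 : ℝ)+6)/(2 - (-1 : ℝ))
        = σ - 3*((⌊(σ+1)/3⌋ : ℤ):ℝ) + 1 := by
      norm_num
    rw [h3]
    ring

section wfacts
variable {m M b c : ℝ}

lemma curve_w_mem (hb1 : -1 ≤ b) (hb2 : b ≤ 1) (hid : M - 3*(b+1) = m)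
    (hc1 : m ≤ c) (hc2 : c ≤ M+3) :
    b ≤ b + (c-m)*(2-b)/(3*b+6) ∧ b + (c-m)*(2-b)/(3*b+6) ≤ 2 := by
  have hD : (0:ℝ) < 3*b+6 := by linarith
  have h2b : (0:ℝ) < 2-b := by linarith
  constructor
  · have : 0 ≤ (c-m)*(2-b)/(3*b+6) := div_nonneg (mul_nonneg (by linarith) h2b.le) hD.le
    linarith
  · have key : (c-m)*(2-b)/(3*b+6) ≤ 2-b := by
      rw [div_le_iff₀ hD]
      nlinarith [mul_le_mul_of_nonneg_right (show c-m ≤ 3*b+6 by linarith) h2b.le]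
    linarith

lemma curve_w_eq_b (hb1 : -1 ≤ b) (hb2 : b ≤ 1)
    (hle : b + (c-m)*(2-b)/(3*b+6) ≤ b) (hc1 : m ≤ c) : c = m := by
  have hD : (0:ℝ) < 3*b+6 := by linarith
  have h2b : (0:ℝ) < 2-b := by linarith
  have h0 : (c-m)*(2-b)/(3*b+6) = 0 :=
    le_antisymm (by linarith) (div_nonneg (mul_nonneg (by linarith) h2b.le) hD.le)
  have := (div_eq_zero_iff.mp h0).resolve_right (ne_of_gt hD)
  rcases mul_eq_zero.mp this with h|h
  · linarith
  · linarith

lemma curve_w_eq_two (hb1 : -1 ≤ b) (hb2 : b ≤ 1) (hid : M - 3*(b+1) = m)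
    (heq : b + (c-m)*(2-b)/(3*b+6) = 2) : c = M+3 := by
  have hD : (0:ℝ) < 3*b+6 := by linarith
  have h2b : (0:ℝ) < 2-b := by linarith
  have h1 : (c-m)*(2-b) = (2-b)*(3*b+6) := by
    have h0 : (c-m)*(2-b)/(3*b+6) = 2-b := by linarith
    rw [div_eq_iff hD.ne'] at h0
    linarith
  have h2 : c - m = 3*b+6 := by
    have := mul_right_cancel₀ (ne_of_gt h2b) (by linarith [h1] : (c-m)*(2-b) = (3*b+6)*(2-b))
    linarith
  linarith

lemma curve_rise_val (hb1 : -1 ≤ b) (hb2 : b ≤ 1) :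
    m + ((b + (c-m)*(2-b)/(3*b+6)) - b)*(3*b+6)/(2-b) = c := by
  have hD : (3*b+6 : ℝ) ≠ 0 := ne_of_gt (by linarith : (0:ℝ) < 3*b+6)
  have h2b : (2-b : ℝ) ≠ 0 := by
    intro h; linarith [h]
  rw [add_sub_cancel_left, div_mul_cancel₀ _ hD, mul_div_cancel_right₀ _ h2b]
  ring

end wfacts

/-- Main exactness lemma for curves. -/
lemma LamB_exact {x v : ℝ} {j : ℤ} (hc1 : mmB (cl01 x) ≤ v - 3*j)
    (hc2 : v - 3*j ≤ MMB (cl01 x) + 3) : LamB x (CurveB x v j) = v := by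
  obtain ⟨hy0, hy1⟩ := cl01_mem x
  obtain ⟨hb1, hb2⟩ := bbB_mem hy0 hy1
  have hid := fold_identity (cl01 x)
  have hcurve : CurveB x v j
      = 3*(j:ℝ) + (bbB (cl01 x) + ((v - 3*j) - mmB (cl01 x))*(2 - bbB (cl01 x))/(3*(bbB (cl01 x))+6)) := by
    unfold CurveB; ring_nf
  obtain ⟨hwb, hw2⟩ := curve_w_mem hb1 hb2 hid hc1 hc2
  rcases lt_or_eq_of_le hw2 with hwlt|hweq
  · rw [hcurve, LamB_eval x (by linarith) hwlt]
    unfold PcellB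
    rcases le_or_gt (bbB (cl01 x) + ((v - 3*j) - mmB (cl01 x))*(2 - bbB (cl01 x))/(3*(bbB (cl01 x))+6)) (bbB (cl01 x)) with hle|hgt
    · have hcm := curve_w_eq_b hb1 hb2 hle hc1
      rw [if_pos hle]
      have hwbb : bbB (cl01 x) + ((v - 3*j) - mmB (cl01 x))*(2 - bbB (cl01 x))/(3*(bbB (cl01 x))+6) = bbB (cl01 x) := le_antisymm hle hwb
      rw [hwbb, hid]
      linarith
    · rw [if_neg (not_le.mpr hgt)]
      have := curve_rise_val (m := mmB (cl01 x)) (c := v - 3*j) hb1 hb2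
      linarith [this]
  · have hcM := curve_w_eq_two hb1 hb2 hid hweq
    have hpt : CurveB x v j = 3*(((j+1) : ℤ):ℝ) + (-1) := by
      rw [hcurve, hweq]; push_cast; ring
    rw [hpt, LamB_eval x (le_refl _) (by norm_num)]
    unfold PcellB
    rw [if_pos hb1]
    push_cast
    linarith

end BingSquare2

noncomputable section BingSquare3

/-- cell index for the left-edge branch -/
def jL (v : ℝ) : ℤ := ⌊v/3⌋ - 1
/-- cell index for the right-edge branch -/
def jR (v : ℝ) : ℤ := if v - 3*(⌊(v+2)/3⌋ : ℤ) ≤ 0 then ⌊(v+2)/3⌋ else ⌊(v+2)/3⌋ + 1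

lemma fracL_bounds (v : ℝ) : 0 ≤ v - 3*(⌊v/3⌋ : ℤ) ∧ v - 3*(⌊v/3⌋ : ℤ) < 3 := by
  have h1 : ((⌊v/3⌋ : ℤ) : ℝ) ≤ v/3 := Int.floor_le _
  have h2 : v/3 < (⌊v/3⌋ : ℤ) + 1 := Int.lt_floor_add_one _
  constructor <;> [linarith; linarith]

lemma fracR_bounds (v : ℝ) : -2 ≤ v - 3*(⌊(v+2)/3⌋ : ℤ) ∧ v - 3*(⌊(v+2)/3⌋ : ℤ) < 1 := by
  have h1 : ((⌊(v+2)/3⌋ : ℤ) : ℝ) ≤ (v+2)/3 := Int.floor_le _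
  have h2 : (v+2)/3 < (⌊(v+2)/3⌋ : ℤ) + 1 := Int.lt_floor_add_one _
  constructor <;> [linarith; linarith]

lemma CurveB_line {x : ℝ} (hMm : MMB (cl01 x) = mmB (cl01 x)) (v : ℝ) (j : ℤ) :
    CurveB x v j = v - 1 - mmB (cl01 x) := by
  have hbb : bbB (cl01 x) = -1 := by unfold bbB; rw [hMm]; ring
  unfold CurveB
  rw [hbb]
  norm_num
  ring

lemma line_curve_exact {x : ℝ} (v : ℝ) (j : ℤ) (hMm : MMB (cl01 x) = mmB (cl01 x)) :
    LamB x (CurveB x v j) = v := by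
  rw [LamB_line hMm, CurveB_line hMm]; ring

/-- the left-edge branch curve is an exact level curve left of 3/4 -/
lemma left_exact (x v : ℝ) (hx : cl01 x ≤ 3/4) : LamB x (CurveB x v (jL v)) = v := by
  obtain ⟨hy0, hy1⟩ := cl01_mem x
  obtain ⟨hf1, hf2⟩ := fracL_bounds v
  have hc : v - 3*((jL v : ℤ) : ℝ) = (v - 3*(⌊v/3⌋ : ℤ)) + 3 := by unfold jL; push_cast; ring
  rcases le_total (cl01 x) (1/8) with h|h
  · exact line_curve_exact v _ ((regB1 hy0 h).2.trans (regB1 hy0 h).1.symm)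
  · have hMM : MMB (cl01 x) = 3 := by
      rcases le_total (cl01 x) (1/4) with h'|h'
      · exact (regB2 h h').2
      · exact (regB3 h' hx).2
    have hmm3 : mmB (cl01 x) ≤ 3 := (square_facts hy0 hy1).2.1
    apply LamB_exact
    · rw [hc]; linarith
    · rw [hc, hMM]; linarith

/-- the right-edge branch curve is an exact level curve right of 1/4 -/
lemma right_exact (x v : ℝ) (hx : 1/4 ≤ cl01 x) : LamB x (CurveB x v (jR v)) = v := by
  obtain ⟨hy0, hy1⟩ := cl01_mem x
  obtain ⟨hf1, hf2⟩ := fracR_bounds v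
  rcases le_total (7/8) (cl01 x) with h|h
  · exact line_curve_exact v _ ((regB5 h hy1).2.trans (regB5 h hy1).1.symm)
  · have hmm : mmB (cl01 x) = -3 := by
      rcases le_total (cl01 x) (3/4) with h'|h'
      · exact (regB3 hx h').1
      · exact (regB4 h' h).1
    have hMM3 : -3 ≤ MMB (cl01 x) := (square_facts hy0 hy1).2.2.1
    unfold jR
    rcases le_or_gt (v - 3*(⌊(v+2)/3⌋ : ℤ)) 0 with ht|ht
    · rw [if_pos ht]
      apply LamB_exact
      · rw [hmm]; linarith
      · linarith
    · rw [if_neg (not_le.mpr ht)]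
      have hc : v - 3*(((⌊(v+2)/3⌋ + 1 : ℤ)) : ℝ) = (v - 3*(⌊(v+2)/3⌋ : ℤ)) - 3 := by
        push_cast; ring
      apply LamB_exact
      · rw [hmm, hc]; linarith
      · rw [hc]; linarith

lemma bbB_mid {y : ℝ} (h0 : 1/4 ≤ y) (h1 : y ≤ 3/4) : bbB y = 1 := by
  unfold bbB
  rw [(regB3 h0 h1).1, (regB3 h0 h1).2]
  norm_num

/-- separation bound : in the middle, the left branch stays low -/
lemma left_curve_le {x : ℝ} (v : ℝ) (h3 : 1/4 ≤ cl01 x) (h5 : cl01 x ≤ 3/4) :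
    CurveB x v (jL v) ≤ 3*((⌊v/3⌋ : ℤ) : ℝ) - 1 := by
  obtain ⟨hf1, hf2⟩ := fracL_bounds v
  unfold CurveB
  rw [bbB_mid h3 h5, (regB3 h3 h5).1]
  have he : (3:ℝ)*1 + 6 = 9 := by norm_num
  have h9 : (v - 3*((jL v : ℤ):ℝ) - -3) = (v - 3*(⌊v/3⌋ : ℤ)) + 6 := by unfold jL; push_cast; ring
  rw [he, h9]
  have hj : ((jL v : ℤ) : ℝ) = ((⌊v/3⌋ : ℤ) : ℝ) - 1 := by unfold jL; push_cast; ring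
  rw [hj]
  have : ((v - 3*(⌊v/3⌋ : ℤ)) + 6) * (2 - 1) / 9 ≤ 1 := by
    norm_num
    linarith
  linarith

/-- separation bound : in the middle, the right branch stays high -/
lemma right_curve_ge {x : ℝ} (v : ℝ) (h3 : 1/4 ≤ cl01 x) (h5 : cl01 x ≤ 3/4) :
    3*((⌊(v+2)/3⌋ : ℤ) : ℝ) + 1 ≤ CurveB x v (jR v) := by
  obtain ⟨hf1, hf2⟩ := fracR_bounds v
  unfold CurveB jR
  rw [bbB_mid h3 h5, (regB3 h3 h5).1]
  have he : (3:ℝ)*1 + 6 = 9 := by norm_num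
  rcases le_or_gt (v - 3*(⌊(v+2)/3⌋ : ℤ)) 0 with ht|ht
  · rw [if_pos ht, he]
    have h0 : 0 ≤ (v - 3*((⌊(v+2)/3⌋ : ℤ):ℝ) - -3) * (2-1) / 9 := by
      norm_num
      linarith
    linarith
  · rw [if_neg (not_le.mpr ht), he]
    have h0 : 0 ≤ (v - 3*(((⌊(v+2)/3⌋ + 1 : ℤ)):ℝ) - -3) * (2-1) / 9 := by
      norm_num
      push_cast
      linarith
    push_cast
    push_cast at h0
    linarith

/-- `LamB` is uniformly close to the projection -/
lemma LamB_close (x σ : ℝ) : |LamB x σ - σ| ≤ 8 := by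
  obtain ⟨hy0, hy1⟩ := cl01_mem x
  obtain ⟨hm1, hm2, hM1, hM2, hmM, hMm6⟩ := square_facts hy0 hy1
  obtain ⟨hb1, hb2⟩ := bbB_mem hy0 hy1
  have hid := fold_identity (cl01 x)
  obtain ⟨hs1, hs2⟩ := cell_bounds σ
  have hσ : σ = 3*((⌊(σ+1)/3⌋ : ℤ):ℝ) + (σ - 3*(⌊(σ+1)/3⌋ : ℤ)) := by ring
  unfold LamB PcellB
  rcases le_or_gt (σ - 3*((⌊(σ+1)/3⌋ : ℤ):ℝ)) (bbB (cl01 x)) with h|h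
  · rw [if_pos h, abs_le]
    constructor <;> nlinarith
  · rw [if_neg (not_le.mpr h)]
    have hD : (0:ℝ) < 3*(bbB (cl01 x))+6 := by linarith
    have h2b : (0:ℝ) < 2-(bbB (cl01 x)) := by linarith
    have hup : (σ - 3*((⌊(σ+1)/3⌋ : ℤ):ℝ) - bbB (cl01 x)) * (3*(bbB (cl01 x))+6)/(2-(bbB (cl01 x)))
        ≤ 3*(bbB (cl01 x))+6 := by
      rw [div_le_iff₀ h2b]
      nlinarith
    have hlo : 0 ≤ (σ - 3*((⌊(σ+1)/3⌋ : ℤ):ℝ) - bbB (cl01 x)) * (3*(bbB (cl01 x))+6)/(2-(bbB (cl01 x))) :=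
      div_nonneg (mul_nonneg (by linarith) hD.le) h2b.le
    rw [abs_le]
    constructor <;> nlinarith

end BingSquare3

noncomputable section BingSquare4

lemma PcellB_cl_cont : Continuous fun q : ℝ × ℝ => PcellB (cl01 q.1) q.2 := by
  unfold PcellB
  have hB : Continuous fun q : ℝ × ℝ => bbB (cl01 q.1) :=
    bbB_cont.comp (cl01_cont.comp continuous_fst)
  have hM : Continuous fun q : ℝ × ℝ => MMB (cl01 q.1) :=
    MMB_cont.comp (cl01_cont.comp continuous_fst)
  have hm : Continuous fun q : ℝ × ℝ => mmB (cl01 q.1) :=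
    mmB_cont.comp (cl01_cont.comp continuous_fst)
  apply Continuous.if_le
  · exact hM.sub (continuous_const.mul (continuous_snd.add continuous_const))
  · apply Continuous.add hm
    apply Continuous.div
    · exact (continuous_snd.sub hB).mul ((continuous_const.mul hB).add continuous_const)
    · exact continuous_const.sub hB
    · intro q
      have := (bbB_mem (cl01_mem q.1).1 (cl01_mem q.1).2).2
      intro hcon
      rw [sub_eq_zero] at hcon
      linarith [hcon]
  · exact continuous_snd
  · exact hB
  · intro q hq
    rw [hq]
    have : (bbB (cl01 q.1) - bbB (cl01 q.1)) = 0 := by ring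
    rw [this, zero_mul, zero_div, add_zero]
    rw [← fold_identity (cl01 q.1)]

lemma LamB_cont : Continuous fun q : ℝ × ℝ => LamB q.1 q.2 := by
  rw [continuous_iff_continuousAt]
  intro q₀
  set k₀ : ℤ := ⌊(q₀.2+1)/3⌋ with hk₀
  -- local glued formula
  set H : ℝ × ℝ → ℝ := fun q =>
    if q.2 ≤ 3*(k₀:ℝ) - 1 then 3*((k₀:ℝ)-1) + PcellB (cl01 q.1) (q.2 - 3*((k₀:ℝ)-1))
    else 3*(k₀:ℝ) + PcellB (cl01 q.1) (q.2 - 3*(k₀:ℝ)) with hH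
  have hHcont : Continuous H := by
    rw [hH]
    apply Continuous.if_le
    · exact continuous_const.add (PcellB_cl_cont.comp
        (continuous_fst.prodMk (continuous_snd.sub continuous_const)))
    · exact continuous_const.add (PcellB_cl_cont.comp
        (continuous_fst.prodMk (continuous_snd.sub continuous_const)))
    · exact continuous_snd
    · exact continuous_const
    · intro q hq
      obtain ⟨hy0, hy1⟩ := cl01_mem q.1
      obtain ⟨hb1, hb2⟩ := bbB_mem hy0 hy1
      have hid := fold_identity (cl01 q.1)
      have e1 : q.2 - 3*((k₀:ℝ)-1) = 2 := by rw [hq]; ring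
      have e2 : q.2 - 3*(k₀:ℝ) = -1 := by rw [hq]; ring
      rw [e1, e2]
      unfold PcellB
      rw [if_neg (show ¬((2:ℝ) ≤ bbB (cl01 q.1)) by intro hcon; linarith),
        if_pos (show (-1:ℝ) ≤ bbB (cl01 q.1) from hb1)]
      have h2b : (2 - bbB (cl01 q.1)) ≠ 0 := by intro hcon; linarith [sub_eq_zero.mp hcon]
      field_simp
      try linarith [hid]
  have hmem : q₀ ∈ {q : ℝ × ℝ | 3*(k₀:ℝ) - 2 < q.2 ∧ q.2 < 3*(k₀:ℝ) + 2} := by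
    have h1 : ((k₀ : ℤ) : ℝ) ≤ (q₀.2+1)/3 := hk₀ ▸ Int.floor_le _
    have h2 : (q₀.2+1)/3 < (k₀ : ℝ) + 1 := by
      rw [hk₀]; exact Int.lt_floor_add_one _
    exact ⟨by linarith, by linarith⟩
  have hopen : IsOpen {q : ℝ × ℝ | 3*(k₀:ℝ) - 2 < q.2 ∧ q.2 < 3*(k₀:ℝ) + 2} := by
    apply IsOpen.inter
    · exact isOpen_lt continuous_const continuous_snd
    · exact isOpen_lt continuous_snd continuous_const
  have heq : ∀ q ∈ {q : ℝ × ℝ | 3*(k₀:ℝ) - 2 < q.2 ∧ q.2 < 3*(k₀:ℝ) + 2},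
      LamB q.1 q.2 = H q := by
    rintro q ⟨hq1, hq2⟩
    show LamB q.1 q.2 = if q.2 ≤ 3*(k₀:ℝ) - 1 then 3*((k₀:ℝ)-1) + PcellB (cl01 q.1) (q.2 - 3*((k₀:ℝ)-1))
      else 3*(k₀:ℝ) + PcellB (cl01 q.1) (q.2 - 3*(k₀:ℝ))
    rcases le_or_gt q.2 (3*(k₀:ℝ) - 1) with h|h
    · rw [if_pos h]
      rcases eq_or_lt_of_le h with he|hlt
      · -- boundary point : q.2 = 3k₀ - 1
        have hd : q.2 = 3*((k₀ : ℤ):ℝ) + (-1) := by rw [he]; push_cast; ring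
        have hLam : LamB q.1 q.2 = 3*((k₀:ℤ):ℝ) + PcellB (cl01 q.1) (-1) := by
          rw [hd]; exact LamB_eval q.1 (le_refl _) (by norm_num)
        obtain ⟨hy0, hy1⟩ := cl01_mem q.1
        obtain ⟨hb1, hb2⟩ := bbB_mem hy0 hy1
        have hid := fold_identity (cl01 q.1)
        have e1 : q.2 - 3*((k₀:ℝ)-1) = 2 := by rw [he]; ring
        rw [hLam, e1]
        unfold PcellB
        rw [if_pos (show (-1:ℝ) ≤ bbB (cl01 q.1) from hb1),
          if_neg (show ¬((2:ℝ) ≤ bbB (cl01 q.1)) by intro hcon; linarith)]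
        have h2b : (2 - bbB (cl01 q.1)) ≠ 0 := by intro hcon; linarith [sub_eq_zero.mp hcon]
        field_simp
        try linarith [hid]
      · -- interior of lower cell
        have hd : q.2 = 3*(((k₀ - 1) : ℤ):ℝ) + (q.2 - 3*((k₀:ℝ)-1)) := by push_cast; ring
        have hw1 : -1 ≤ q.2 - 3*((k₀:ℝ)-1) := by linarith
        have hw2 : q.2 - 3*((k₀:ℝ)-1) < 2 := by linarith
        calc LamB q.1 q.2 = LamB q.1 (3*(((k₀ - 1) : ℤ):ℝ) + (q.2 - 3*((k₀:ℝ)-1))) := by rw [← hd]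
          _ = 3*(((k₀ - 1) : ℤ):ℝ) + PcellB (cl01 q.1) (q.2 - 3*((k₀:ℝ)-1)) :=
              LamB_eval q.1 hw1 hw2
          _ = 3*((k₀:ℝ)-1) + PcellB (cl01 q.1) (q.2 - 3*((k₀:ℝ)-1)) := by push_cast; ring
    · rw [if_neg (not_le.mpr h)]
      have hd : q.2 = 3*((k₀ : ℤ):ℝ) + (q.2 - 3*(k₀:ℝ)) := by push_cast; ring
      have hw1 : -1 ≤ q.2 - 3*(k₀:ℝ) := by linarith
      have hw2 : q.2 - 3*(k₀:ℝ) < 2 := by linarith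
      calc LamB q.1 q.2 = LamB q.1 (3*((k₀ : ℤ):ℝ) + (q.2 - 3*(k₀:ℝ))) := by rw [← hd]
        _ = 3*((k₀:ℤ):ℝ) + PcellB (cl01 q.1) (q.2 - 3*(k₀:ℝ)) := LamB_eval q.1 hw1 hw2
  apply ContinuousAt.congr (hHcont.continuousAt)
  filter_upwards [hopen.mem_nhds hmem] with q hq
  exact (heq q hq).symm

lemma CurveB_cont (v : ℝ) (j : ℤ) : Continuous fun x => CurveB x v j := by
  unfold CurveB
  have hB : Continuous fun x : ℝ => bbB (cl01 x) := bbB_cont.comp cl01_cont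
  have hm : Continuous fun x : ℝ => mmB (cl01 x) := mmB_cont.comp cl01_cont
  apply Continuous.add (continuous_const.add hB)
  apply Continuous.div
  · exact ((continuous_const.sub hm).mul (continuous_const.sub hB))
  · exact (continuous_const.mul hB).add continuous_const
  · intro x
    have := (bbB_mem (cl01_mem x).1 (cl01_mem x).2).1
    intro hcon
    have : (3:ℝ)*(bbB (cl01 x)) + 6 > 0 := by linarith
    linarith [hcon ▸ this]

end BingSquare4

attribute [irreducible] LamB CurveB

noncomputable section BingMain
open Metric

variable {X : Type*} [MetricSpace X] [CompactSpace X]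

/-- The crooked-partition property for bands of a map. -/
def PartProp (g : C(X, ℝ)) (γ : ℝ) (A B U V : Set X) : Prop :=
  ∀ t : ℝ, ∃ Y₁ Y₂ Y₃ : Set X,
    IsClosed Y₁ ∧ IsClosed Y₂ ∧ IsClosed Y₃ ∧
    (g ⁻¹' (Icc (t-γ) (t+γ)) ⊆ Y₁ ∪ Y₂ ∪ Y₃) ∧
    (A ∩ g ⁻¹' (Icc (t-γ) (t+γ)) ⊆ Y₁) ∧
    (B ∩ g ⁻¹' (Icc (t-γ) (t+γ)) ⊆ Y₃) ∧
    Y₁ ∩ Y₃ = ∅ ∧ Y₁ ∩ Y₂ ⊆ V ∧ Y₂ ∩ Y₃ ⊆ U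

lemma PartProp_of_close {g g' : C(X,ℝ)} {γ γ' : ℝ} {A B U V : Set X}
    (h : PartProp g γ A B U V) (hd : dist g' g + γ' ≤ γ) :
    PartProp g' γ' A B U V := by
  intro t
  obtain ⟨Y₁, Y₂, Y₃, hc1, hc2, hc3, hcov, hA, hB, h13, h12, h23⟩ := h t
  have hsub : g' ⁻¹' (Icc (t-γ') (t+γ')) ⊆ g ⁻¹' (Icc (t-γ) (t+γ)) := by
    intro p hp
    simp only [mem_preimage, mem_Icc] at hp ⊢
    have := ContinuousMap.dist_apply_le_dist (f := g') (g := g) p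
    rw [Real.dist_eq] at this
    rcases abs_sub_le_iff.mp this with ⟨ha, hb⟩
    constructor <;> linarith [hp.1, hp.2]
  exact ⟨Y₁, Y₂, Y₃, hc1, hc2, hc3, fun p hp => hcov (hsub hp),
    fun p hp => hA ⟨hp.1, hsub hp.2⟩, fun p hp => hB ⟨hp.1, hsub hp.2⟩, h13, h12, h23⟩

/-- The key crooked-perturbation lemma. -/
lemma core_crooked (g ρ : C(X, ℝ)) (hρ : ∀ p, ρ p ∈ Icc (0:ℝ) 1)
    (A B U V : Set X) (hA : ∀ p ∈ A, ρ p = 0) (hB : ∀ p ∈ B, ρ p = 1)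
    (hU : ∀ p, ρ p < 1/2 → p ∈ U) (hV : ∀ p, 1/2 < ρ p → p ∈ V)
    {δ : ℝ} (hδ : 0 < δ) :
    ∃ g' : C(X,ℝ), dist g' g ≤ 8*δ ∧ PartProp g' (δ/4) A B U V := by
  have hLamC : Continuous fun p : X => LamB (ρ p) (g p / δ) :=
    LamB_cont.comp ((map_continuous ρ).prodMk ((map_continuous g).div_const δ))
  set g' : C(X, ℝ) := ⟨fun p => δ * LamB (ρ p) (g p / δ), continuous_const.mul hLamC⟩ with hg'
  have hg'app : ∀ p, g' p = δ * LamB (ρ p) (g p / δ) := fun p => rfl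
  have hdist : dist g' g ≤ 8*δ := by
    rw [ContinuousMap.dist_le (by positivity)]
    intro p
    rw [Real.dist_eq, hg'app]
    have h1 : δ * LamB (ρ p) (g p / δ) - g p = δ * (LamB (ρ p) (g p / δ) - g p / δ) := by
      field_simp
    rw [h1, abs_mul, abs_of_pos hδ]
    calc δ * |LamB (ρ p) (g p / δ) - g p / δ| ≤ δ * 8 :=
          mul_le_mul_of_nonneg_left (LamB_close _ _) hδ.le
      _ = 8 * δ := by ring
  refine ⟨g', hdist, ?_⟩
  intro t
  -- square level data
  set τ : ℝ := t / δ with hτ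
  set u : ℝ := τ + 1/2 with hu
  set w : ℝ := τ - 1/2 with hw
  set band : Set X := g' ⁻¹' (Icc (t-δ/4) (t+δ/4)) with hband
  have hbandsq : ∀ p ∈ band, |LamB (ρ p) (g p / δ) - τ| ≤ 1/4 := by
    intro p hp
    simp only [hband, mem_preimage, mem_Icc] at hp
    have h1 : LamB (ρ p) (g p / δ) - τ = (g' p - t)/δ := by
      rw [hg'app, hτ]; field_simp
    rw [h1, abs_div, abs_of_pos hδ, div_le_iff₀ hδ]
    rw [abs_le]
    constructor <;> linarith [hp.1, hp.2]
  have hρmem : ∀ p : X, cl01 (ρ p) = ρ p := fun p => cl01_of_mem (hρ p).1 (hρ p).2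
  -- the three pieces
  set Y₁ : Set X := band ∩ {p | ρ p ≤ 5/8 ∧ CurveB (ρ p) w (jL w) ≤ g p / δ ∧
    g p / δ ≤ CurveB (ρ p) u (jL u)} with hY₁
  set Y₃ : Set X := band ∩ {p | 3/8 ≤ ρ p ∧ CurveB (ρ p) w (jR w) ≤ g p / δ ∧
    g p / δ ≤ CurveB (ρ p) u (jR u)} with hY₃
  set Y₂ : Set X := closure (band \ (Y₁ ∪ Y₃)) with hY₂
  have hbandclosed : IsClosed band := IsClosed.preimage (map_continuous g') isClosed_Icc
  have hY₁closed : IsClosed Y₁ := by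
    apply hbandclosed.inter
    apply IsClosed.inter (isClosed_le (map_continuous ρ) continuous_const)
    apply IsClosed.inter
    · exact isClosed_le ((CurveB_cont w (jL w)).comp (map_continuous ρ))
        ((map_continuous g).div_const δ)
    · exact isClosed_le ((map_continuous g).div_const δ)
        ((CurveB_cont u (jL u)).comp (map_continuous ρ))
  have hY₃closed : IsClosed Y₃ := by
    apply hbandclosed.inter
    apply IsClosed.inter (isClosed_le continuous_const (map_continuous ρ))
    apply IsClosed.inter
    · exact isClosed_le ((CurveB_cont w (jR w)).comp (map_continuous ρ))
        ((map_continuous g).div_const δ)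
    · exact isClosed_le ((map_continuous g).div_const δ)
        ((CurveB_cont u (jR u)).comp (map_continuous ρ))
  refine ⟨Y₁, Y₂, Y₃, hY₁closed, isClosed_closure, hY₃closed, ?_, ?_, ?_, ?_, ?_, ?_⟩
  · -- cover
    intro p hp
    by_cases h : p ∈ Y₁ ∪ Y₃
    · rcases h with h|h
      · exact Or.inl (Or.inl h)
      · exact Or.inr h
    · exact Or.inl (Or.inr (subset_closure ⟨hp, h⟩))
  · -- A ∩ band ⊆ Y₁
    rintro p ⟨hpA, hpb⟩
    have hρ0 : ρ p = 0 := hA p hpA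
    have hcl : cl01 (ρ p) = 0 := by rw [hρmem, hρ0]
    have hmm0 : mmB (cl01 (ρ p)) = 0 := by rw [hcl]; have := (regB1 le_rfl (by norm_num)).1; simpa using this
    have hMM0 : MMB (cl01 (ρ p)) = 0 := by rw [hcl]; have := (regB1 le_rfl (by norm_num)).2; simpa using this
    have hline : ∀ σ : ℝ, LamB (ρ p) σ = σ + 1 := by
      intro σ; rw [LamB_line (by rw [hmm0, hMM0]), hmm0, add_zero]
    have hsq := hbandsq p hpb
    rw [hline] at hsq
    rcases abs_le.mp hsq with ⟨hl, hr⟩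
    have hcw : CurveB (ρ p) w (jL w) = w - 1 := by
      rw [CurveB_line (by rw [hmm0, hMM0]), hmm0, sub_zero]
    have hcu : CurveB (ρ p) u (jL u) = u - 1 := by
      rw [CurveB_line (by rw [hmm0, hMM0]), hmm0, sub_zero]
    exact ⟨hpb, by rw [hρ0]; norm_num, by rw [hcw, hw]; linarith, by rw [hcu, hu]; linarith⟩
  · -- B ∩ band ⊆ Y₃
    rintro p ⟨hpB, hpb⟩
    have hρ1 : ρ p = 1 := hB p hpB
    have hcl : cl01 (ρ p) = 1 := by rw [hρmem, hρ1]
    have hmm1 : mmB (cl01 (ρ p)) = -2 := by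
      rw [hcl]; have := (regB5 (by norm_num) le_rfl).1; rw [this]; norm_num
    have hMM1 : MMB (cl01 (ρ p)) = -2 := by
      rw [hcl]; have := (regB5 (by norm_num) le_rfl).2; rw [this]; norm_num
    have hline : ∀ σ : ℝ, LamB (ρ p) σ = σ - 1 := by
      intro σ; rw [LamB_line (by rw [hmm1, hMM1]), hmm1]; ring
    have hsq := hbandsq p hpb
    rw [hline] at hsq
    rcases abs_le.mp hsq with ⟨hl, hr⟩
    have hcw : CurveB (ρ p) w (jR w) = w + 1 := by
      rw [CurveB_line (by rw [hmm1, hMM1]), hmm1]; ring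
    have hcu : CurveB (ρ p) u (jR u) = u + 1 := by
      rw [CurveB_line (by rw [hmm1, hMM1]), hmm1]; ring
    exact ⟨hpb, by rw [hρ1]; norm_num, by rw [hcw, hw]; linarith, by rw [hcu, hu]; linarith⟩
  · -- Y₁ ∩ Y₃ = ∅
    rw [Set.eq_empty_iff_forall_notMem]
    rintro p ⟨⟨hpb, hp58, _, hpU⟩, ⟨_, hp38, hpL, _⟩⟩
    have hcl14 : 1/4 ≤ cl01 (ρ p) := by rw [hρmem]; linarith
    have hcl34 : cl01 (ρ p) ≤ 3/4 := by rw [hρmem]; linarith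
    have h1 := left_curve_le u hcl14 hcl34
    have h2 := right_curve_ge w hcl14 hcl34
    have hfloor : (⌊u/3⌋ : ℤ) ≤ ⌊(w+2)/3⌋ := by
      apply Int.floor_mono
      rw [hu, hw]
      linarith
    have hfloor' : ((⌊u/3⌋ : ℤ) : ℝ) ≤ ((⌊(w+2)/3⌋ : ℤ) : ℝ) := by exact_mod_cast hfloor
    linarith
  · -- Y₁ ∩ Y₂ ⊆ V
    rintro p ⟨⟨hpb, hp58, hps, hpS⟩, hp2⟩
    apply hV
    by_contra hno
    push_neg at hno
    have hcl : cl01 (ρ p) = ρ p := hρmem p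
    have hcl34 : cl01 (ρ p) ≤ 3/4 := by rw [hcl]; linarith
    have hsq := hbandsq p hpb
    -- strictness
    have hs : CurveB (ρ p) w (jL w) < g p / δ := by
      rcases lt_or_eq_of_le hps with h|h
      · exact h
      · exfalso
        have := left_exact (ρ p) w hcl34
        rw [h] at this
        rw [this] at hsq
        rw [hw] at hsq
        rcases abs_le.mp hsq with ⟨h1, h2⟩
        linarith
    have hS : g p / δ < CurveB (ρ p) u (jL u) := by
      rcases lt_or_eq_of_le hpS with h|h
      · exact h
      · exfalso
        have := left_exact (ρ p) u hcl34
        rw [← h] at this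
        rw [this] at hsq
        rw [hu] at hsq
        rcases abs_le.mp hsq with ⟨h1, h2⟩
        linarith
    -- the open neighbourhood
    set N : Set X := {q | ρ q < 5/8 ∧ CurveB (ρ q) w (jL w) < g q / δ ∧
      g q / δ < CurveB (ρ q) u (jL u)} with hN
    have hNopen : IsOpen N := by
      apply IsOpen.inter (isOpen_lt (map_continuous ρ) continuous_const)
      apply IsOpen.inter
      · exact isOpen_lt ((CurveB_cont w (jL w)).comp (map_continuous ρ))
          ((map_continuous g).div_const δ)
      · exact isOpen_lt ((map_continuous g).div_const δ)
          ((CurveB_cont u (jL u)).comp (map_continuous ρ))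
    have hpN : p ∈ N := ⟨by linarith, hs, hS⟩
    obtain ⟨z, hzN, hzb, hznot⟩ := mem_closure_iff.mp hp2 N hNopen hpN
    exact hznot (Or.inl ⟨hzb, le_of_lt hzN.1, le_of_lt hzN.2.1, le_of_lt hzN.2.2⟩)
  · -- Y₂ ∩ Y₃ ⊆ U
    rintro p ⟨hp2, ⟨hpb, hp38, hps, hpS⟩⟩
    apply hU
    by_contra hno
    push_neg at hno
    have hcl : cl01 (ρ p) = ρ p := hρmem p
    have hcl14 : 1/4 ≤ cl01 (ρ p) := by rw [hcl]; linarith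
    have hsq := hbandsq p hpb
    have hs : CurveB (ρ p) w (jR w) < g p / δ := by
      rcases lt_or_eq_of_le hps with h|h
      · exact h
      · exfalso
        have := right_exact (ρ p) w hcl14
        rw [h] at this
        rw [this] at hsq
        rw [hw] at hsq
        rcases abs_le.mp hsq with ⟨h1, h2⟩
        linarith
    have hS : g p / δ < CurveB (ρ p) u (jR u) := by
      rcases lt_or_eq_of_le hpS with h|h
      · exact h
      · exfalso
        have := right_exact (ρ p) u hcl14
        rw [← h] at this
        rw [this] at hsq
        rw [hu] at hsq
        rcases abs_le.mp hsq with ⟨h1, h2⟩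
        linarith
    set N : Set X := {q | 3/8 < ρ q ∧ CurveB (ρ q) w (jR w) < g q / δ ∧
      g q / δ < CurveB (ρ q) u (jR u)} with hN
    have hNopen : IsOpen N := by
      apply IsOpen.inter (isOpen_lt continuous_const (map_continuous ρ))
      apply IsOpen.inter
      · exact isOpen_lt ((CurveB_cont w (jR w)).comp (map_continuous ρ))
          ((map_continuous g).div_const δ)
      · exact isOpen_lt ((map_continuous g).div_const δ)
          ((CurveB_cont u (jR u)).comp (map_continuous ρ))
    have hpN : p ∈ N := ⟨by linarith, hs, hS⟩
    obtain ⟨z, hzN, hzb, hznot⟩ := mem_closure_iff.mp hp2 N hNopen hpN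
    exact hznot (Or.inr ⟨hzb, le_of_lt hzN.1, le_of_lt hzN.2.1, le_of_lt hzN.2.2⟩)

end BingMain

noncomputable section BingIter
open Metric

variable {X : Type*} [MetricSpace X] [CompactSpace X]

/-- Data for one pair of regions to be crookedly separated. -/
structure PairData (X : Type*) [MetricSpace X] where
  A : Set X
  B : Set X
  U : Set X
  V : Set X
  ρ : C(X, ℝ)
  hρ : ∀ p, ρ p ∈ Icc (0:ℝ) 1
  hA : ∀ p ∈ A, ρ p = 0
  hB : ∀ p ∈ B, ρ p = 1
  hU : ∀ p, ρ p < 1/2 → p ∈ U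
  hV : ∀ p, 1/2 < ρ p → p ∈ V

lemma iterate_crooked (L : List (PairData X)) : ∀ (f : C(X,ℝ)) (δ : ℝ), 0 < δ →
    ∃ (g : C(X,ℝ)) (γ : ℝ), 0 < γ ∧ dist g f ≤ δ ∧
      ∀ T ∈ L, PartProp g γ T.A T.B T.U T.V := by
  induction L with
  | nil =>
    intro f δ hδ
    exact ⟨f, 1, one_pos, by rw [dist_self]; linarith, by intro T hT; exact absurd hT List.not_mem_nil⟩
  | cons T L ih =>
    intro f δ hδ
    obtain ⟨g₁, hd₁, hP₁⟩ :=
      core_crooked f T.ρ T.hρ T.A T.B T.U T.V T.hA T.hB T.hU T.hV (show (0:ℝ) < δ/16 by linarith)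
    obtain ⟨g, γ', hγ', hdist, hall⟩ := ih g₁ (min (δ/2) (δ/128)) (by positivity)
    refine ⟨g, min γ' (δ/128), lt_min hγ' (by positivity), ?_, ?_⟩
    · calc dist g f ≤ dist g g₁ + dist g₁ f := dist_triangle _ _ _
        _ ≤ min (δ/2) (δ/128) + 8*(δ/16) := add_le_add hdist hd₁
        _ ≤ δ := by
            have h1 := min_le_left (δ/2) (δ/128)
            linarith
    · intro T' hT'
      rcases List.mem_cons.mp hT' with h|h
      · subst h
        apply PartProp_of_close hP₁
        have h1 := min_le_right γ' (δ/128)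
        have h2 := min_le_right (δ/2) (δ/128)
        calc dist g g₁ + min γ' (δ/128) ≤ δ/128 + δ/128 := add_le_add (hdist.trans h2) h1
          _ ≤ (δ/16)/4 := by linarith
      · apply PartProp_of_close (hall T' h)
        rw [dist_self, zero_add]
        exact min_le_left _ _

/-- The net-free crooked partition property. -/
def GoodAt (g : C(X,ℝ)) (γ ε : ℝ) : Prop :=
  ∀ (t : ℝ) (c d : X), |g c - t| ≤ γ → |g d - t| ≤ γ → ε ≤ dist c d →
    ∃ Y₁ Y₂ Y₃ : Set X, IsClosed Y₁ ∧ IsClosed Y₂ ∧ IsClosed Y₃ ∧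
      (g ⁻¹' (Icc (t-γ) (t+γ)) ⊆ Y₁ ∪ Y₂ ∪ Y₃) ∧ c ∈ Y₁ ∧ d ∈ Y₃ ∧ Y₁ ∩ Y₃ = ∅ ∧
      (Y₁ ∩ Y₂ ⊆ ball d ε) ∧ (Y₂ ∩ Y₃ ⊆ ball c ε)

/-- A trivial element of `PairData`. -/
def trivialPair : PairData X where
  A := ∅
  B := ∅
  U := univ
  V := univ
  ρ := ContinuousMap.const X (1/2)
  hρ := fun p => by constructor <;> norm_num
  hA := fun p hp => absurd hp (notMem_empty p)
  hB := fun p hp => absurd hp (notMem_empty p)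
  hU := fun p _ => mem_univ p
  hV := fun p _ => mem_univ p

/-- Construction of pair data from two points of a net. -/
lemma pair_data {ε : ℝ} (hε : 0 < ε) (a b : X) (hab : 3*ε/4 ≤ dist a b) :
    ∃ T : PairData X, T.A = closedBall a (ε/8) ∧ T.B = closedBall b (ε/8) ∧
      T.U = ball a (ε/2) ∧ T.V = ball b (ε/2) := by
  obtain ⟨ρA, hA0, hA1, hAm⟩ := exists_continuous_zero_one_of_isClosed
    (isClosed_closedBall (x := a) (ε := ε/8)) (isOpen_ball (x := a) (ε := ε/2)).isClosed_compl
    (by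
      rw [Set.disjoint_left]
      intro p hp hp2
      exact hp2 (mem_ball.mpr (lt_of_le_of_lt (mem_closedBall.mp hp) (by linarith))))
  obtain ⟨ρB, hB0, hB1, hBm⟩ := exists_continuous_zero_one_of_isClosed
    (isClosed_closedBall (x := b) (ε := ε/8)) (isOpen_ball (x := b) (ε := ε/2)).isClosed_compl
    (by
      rw [Set.disjoint_left]
      intro p hp hp2
      exact hp2 (mem_ball.mpr (lt_of_le_of_lt (mem_closedBall.mp hp) (by linarith))))
  refine ⟨⟨closedBall a (ε/8), closedBall b (ε/8), ball a (ε/2), ball b (ε/2),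
    ⟨fun p => (1 + ρA p - ρB p)/2, by fun_prop⟩, ?_, ?_, ?_, ?_, ?_⟩, rfl, rfl, rfl, rfl⟩
  · intro p
    obtain ⟨h1, h2⟩ := hAm p
    obtain ⟨h3, h4⟩ := hBm p
    constructor
    · show 0 ≤ (1 + ρA p - ρB p)/2
      linarith
    · show (1 + ρA p - ρB p)/2 ≤ 1
      linarith
  · intro p hp
    have h1 : ρA p = 0 := hA0 hp
    have h2 : ρB p = 1 := by
      apply hB1
      intro hcon
      have hd1 : dist p a ≤ ε/8 := mem_closedBall.mp hp
      have hd2 : dist p b < ε/2 := mem_ball.mp hcon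
      have := dist_triangle a p b
      rw [dist_comm a p] at this
      linarith
    show (1 + ρA p - ρB p)/2 = 0
    rw [h1, h2]; norm_num
  · intro p hp
    have h2 : ρB p = 0 := hB0 hp
    have h1 : ρA p = 1 := by
      apply hA1
      intro hcon
      have hd1 : dist p b ≤ ε/8 := mem_closedBall.mp hp
      have hd2 : dist p a < ε/2 := mem_ball.mp hcon
      have := dist_triangle a p b
      rw [dist_comm a p] at this
      linarith
    show (1 + ρA p - ρB p)/2 = 1
    rw [h1, h2]; norm_num
  · intro p hp
    by_contra hcon
    have h1 : ρA p = 1 := hA1 hcon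
    obtain ⟨h3, h4⟩ := hBm p
    have : (1 + ρA p - ρB p)/2 < 1/2 := hp
    rw [h1] at this
    linarith
  · intro p hp
    by_contra hcon
    have h2 : ρB p = 1 := hB1 hcon
    obtain ⟨h3, h4⟩ := hAm p
    have : 1/2 < (1 + ρA p - ρB p)/2 := hp
    rw [h2] at this
    linarith

/-- Density step : any map can be perturbed to a crooked one at scale ε. -/
lemma goodAt_dense {ε : ℝ} (hε : 0 < ε) (f : C(X,ℝ)) {δ : ℝ} (hδ : 0 < δ) :
    ∃ g : C(X,ℝ), dist g f ≤ δ ∧ ∃ γ : ℝ, 0 < γ ∧ GoodAt g γ ε := by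
  obtain ⟨s, hs⟩ : ∃ s : Finset X, (univ : Set X) ⊆ ⋃ x ∈ s, ball x (ε/8) := by
    apply isCompact_univ.elim_finite_subcover (fun x : X => ball x (ε/8)) (fun x => isOpen_ball)
    intro x _
    exact mem_iUnion.mpr ⟨x, mem_ball_self (by linarith)⟩
  have hF : ∀ q : X × X, ∃ T : PairData X, 3*ε/4 ≤ dist q.1 q.2 →
      (T.A = closedBall q.1 (ε/8) ∧ T.B = closedBall q.2 (ε/8) ∧
       T.U = ball q.1 (ε/2) ∧ T.V = ball q.2 (ε/2)) := by
    intro q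
    by_cases h : 3*ε/4 ≤ dist q.1 q.2
    · obtain ⟨T, hT⟩ := pair_data hε q.1 q.2 h
      exact ⟨T, fun _ => hT⟩
    · exact ⟨trivialPair, fun h' => absurd h' h⟩
  choose F hFp using hF
  set L : List (PairData X) := (s ×ˢ s).toList.map (fun q => F q) with hL
  obtain ⟨g, γ, hγ, hdist, hall⟩ := iterate_crooked L f δ hδ
  refine ⟨g, hdist, γ, hγ, ?_⟩
  intro t c d hc hd hcd
  obtain ⟨a, ha, hca⟩ : ∃ a ∈ s, c ∈ ball a (ε/8) := by
    have := hs (mem_univ c)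
    simpa using this
  obtain ⟨b, hb, hdb⟩ : ∃ b ∈ s, d ∈ ball b (ε/8) := by
    have := hs (mem_univ d)
    simpa using this
  have hab : 3*ε/4 ≤ dist a b := by
    have h1 : dist c a < ε/8 := mem_ball.mp hca
    have h2 : dist d b < ε/8 := mem_ball.mp hdb
    have h3 := dist_triangle c a b
    have h4 := dist_triangle a b d
    have h5 := dist_triangle c d b
    -- dist c d ≤ dist c a + dist a b + dist b d
    have h6 : dist c d ≤ dist c a + dist a b + dist b d := by
      calc dist c d ≤ dist c b + dist b d := dist_triangle c b d
        _ ≤ (dist c a + dist a b) + dist b d := by linarith [dist_triangle c a b]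
    rw [dist_comm b d] at h6
    linarith
  obtain ⟨eA, eB, eU, eV⟩ := hFp (a, b) hab
  have hmemL : F (a, b) ∈ L := by
    rw [hL]
    apply List.mem_map.mpr
    exact ⟨(a,b), Finset.mem_toList.mpr (Finset.mem_product.mpr ⟨ha, hb⟩), rfl⟩
  obtain ⟨Y₁, Y₂, Y₃, hc1, hc2, hc3, hcov, hAc, hBc, h13, h12, h23⟩ := hall _ hmemL t
  refine ⟨Y₁, Y₂, Y₃, hc1, hc2, hc3, hcov, ?_, ?_, h13, ?_, ?_⟩
  · apply hAc
    constructor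
    · rw [eA]
      exact mem_closedBall.mpr (le_of_lt (mem_ball.mp hca))
    · rw [mem_preimage, mem_Icc]
      rcases abs_le.mp hc with ⟨h1, h2⟩
      constructor <;> linarith
  · apply hBc
    constructor
    · rw [eB]
      exact mem_closedBall.mpr (le_of_lt (mem_ball.mp hdb))
    · rw [mem_preimage, mem_Icc]
      rcases abs_le.mp hd with ⟨h1, h2⟩
      constructor <;> linarith
  · intro z hz
    have := h12 hz
    rw [eV] at this
    have h1 : dist z b < ε/2 := mem_ball.mp this
    have h2 : dist d b < ε/8 := mem_ball.mp hdb
    apply mem_ball.mpr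
    calc dist z d ≤ dist z b + dist b d := dist_triangle z b d
      _ < ε/2 + ε/8 := by rw [dist_comm b d]; linarith
      _ < ε := by linarith
  · intro z hz
    have := h23 hz
    rw [eU] at this
    have h1 : dist z a < ε/2 := mem_ball.mp this
    have h2 : dist c a < ε/8 := mem_ball.mp hca
    apply mem_ball.mpr
    calc dist z c ≤ dist z a + dist a c := dist_triangle z a c
      _ < ε/2 + ε/8 := by rw [dist_comm a c]; linarith
      _ < ε := by linarith

end BingIter

noncomputable section BingFinal
open Metric

variable {X : Type*} [MetricSpace X] [CompactSpace X]

/-- The set of maps crooked at scale `1/(n+1)`. -/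
def GSet (X : Type*) [MetricSpace X] [CompactSpace X] (n : ℕ) : Set C(X,ℝ) :=
  {g | ∃ γ : ℝ, 0 < γ ∧ GoodAt g γ (1/(n+1))}

lemma GSet_open (n : ℕ) : IsOpen (GSet X n) := by
  rw [Metric.isOpen_iff]
  rintro g ⟨γ, hγ, hg⟩
  refine ⟨γ/2, by linarith, ?_⟩
  intro g' hg'
  rw [mem_ball] at hg'
  refine ⟨γ/2, by linarith, ?_⟩
  intro t c d hc hd hcd
  have key : ∀ p : X, |g' p - t| ≤ γ/2 → |g p - t| ≤ γ := by
    intro p hp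
    have h1 := ContinuousMap.dist_apply_le_dist (f := g') (g := g) p
    rw [Real.dist_eq] at h1
    rcases abs_sub_le_iff.mp h1 with ⟨ha, hb⟩
    rcases abs_le.mp hp with ⟨h2, h3⟩
    rw [abs_le]
    constructor <;> linarith [le_of_lt hg']
  obtain ⟨Y₁, Y₂, Y₃, hc1, hc2, hc3, hcov, hcY, hdY, h13, h12, h23⟩ :=
    hg t c d (key c hc) (key d hd) hcd
  refine ⟨Y₁, Y₂, Y₃, hc1, hc2, hc3, ?_, hcY, hdY, h13, h12, h23⟩
  intro p hp
  apply hcov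
  rw [mem_preimage, mem_Icc] at hp ⊢
  have := key p (by rw [abs_le]; constructor <;> linarith [hp.1, hp.2])
  rcases abs_le.mp this with ⟨h1, h2⟩
  constructor <;> linarith

lemma GSet_dense (n : ℕ) : Dense (GSet X n) := by
  rw [Metric.dense_iff]
  intro f r hr
  obtain ⟨g, hgd, γ, hγ, hgood⟩ := goodAt_dense (by positivity : (0:ℝ) < 1/(n+1)) f
    (show (0:ℝ) < r/2 by linarith)
  refine ⟨g, ?_, γ, hγ, hgood⟩
  rw [mem_ball]
  exact lt_of_le_of_lt hgd (by linarith)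

/-- maps in all the `GSet`s have hereditarily indecomposable fibers. -/
lemma fiber_nested (g : C(X,ℝ)) (hg : ∀ n : ℕ, g ∈ GSet X n) (t : ℝ)
    (C D : Set X) (hCc : IsCompact C) (hCconn : IsConnected C)
    (hDc : IsCompact D) (hDconn : IsConnected D)
    (hCf : C ⊆ g ⁻¹' {t}) (hDf : D ⊆ g ⁻¹' {t}) (hCD : (C ∩ D).Nonempty) :
    C ⊆ D ∨ D ⊆ C := by
  by_contra hcon
  push_neg at hcon
  obtain ⟨hnCD, hnDC⟩ := hcon
  obtain ⟨c, hcC, hcD⟩ := not_subset.mp hnCD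
  obtain ⟨d, hdD, hdC⟩ := not_subset.mp hnDC
  have h1 : 0 < infDist c D := (hDc.isClosed.notMem_iff_infDist_pos ⟨d, hdD⟩).mp hcD
  have h2 : 0 < infDist d C := (hCc.isClosed.notMem_iff_infDist_pos ⟨c, hcC⟩).mp hdC
  obtain ⟨n, hn⟩ := exists_nat_one_div_lt (lt_min h1 h2)
  obtain ⟨γ, hγ, hgood⟩ := hg n
  have hgc : |g c - t| ≤ γ := by
    have : g c = t := hCf hcC
    rw [this, sub_self, abs_zero]; linarith
  have hgd : |g d - t| ≤ γ := by
    have : g d = t := hDf hdD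
    rw [this, sub_self, abs_zero]; linarith
  have hcd : 1/((n:ℝ)+1) ≤ dist c d := by
    have h3 : infDist c D ≤ dist c d := infDist_le_dist_of_mem hdD
    have h4 : (1:ℝ)/(n+1) < min (infDist c D) (infDist d C) := hn
    have := min_le_left (infDist c D) (infDist d C)
    linarith
  obtain ⟨Y₁, Y₂, Y₃, hc1, hc2, hc3, hcov, hcY, hdY, h13, h12, h23⟩ :=
    hgood t c d hgc hgd hcd
  obtain ⟨p, hpC, hpD⟩ := hCD
  have hband : ∀ q : X, g q = t → q ∈ Y₁ ∪ Y₂ ∪ Y₃ := by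
    intro q hq
    apply hcov
    rw [mem_preimage, mem_Icc, hq]
    constructor <;> linarith
  by_cases hp1 : p ∈ Y₁
  · -- D runs from p ∈ Y₁ to d ∈ Y₃
    have hDcov : D ⊆ (Y₁ ∪ Y₂) ∪ Y₃ := by
      intro q hq
      have := hband q (hDf hq)
      rwa [union_assoc] at this ⊢
    obtain ⟨q, hqD, hq12, hq3⟩ := isPreconnected_closed_iff.mp hDconn.isPreconnected
      (Y₁ ∪ Y₂) Y₃ (hc1.union hc2) hc3 hDcov ⟨p, hpD, Or.inl hp1⟩ ⟨d, hdD, hdY⟩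
    rcases hq12 with hq1|hq2
    · have : q ∈ Y₁ ∩ Y₃ := ⟨hq1, hq3⟩
      rw [h13] at this
      exact absurd this (notMem_empty q)
    · have hqball : q ∈ ball c (1/(n+1)) := h23 ⟨hq2, hq3⟩
      have h5 : dist c q < 1/((n:ℝ)+1) := by
        rw [← dist_comm q c]; exact mem_ball.mp hqball
      have h6 : infDist c D ≤ dist c q := infDist_le_dist_of_mem hqD
      have h7 : (1:ℝ)/(n+1) < min (infDist c D) (infDist d C) := hn
      have := min_le_left (infDist c D) (infDist d C)
      linarith
  · -- C runs from c ∈ Y₁ to p ∉ Y₁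
    have hp23 : p ∈ Y₂ ∪ Y₃ := by
      rcases hband p (hCf hpC) with h|h
      · rcases h with h|h
        · exact absurd h hp1
        · exact Or.inl h
      · exact Or.inr h
    have hCcov : C ⊆ Y₁ ∪ (Y₂ ∪ Y₃) := by
      intro q hq
      have := hband q (hCf hq)
      rwa [union_assoc] at this
    obtain ⟨q, hqC, hq1, hq23⟩ := isPreconnected_closed_iff.mp hCconn.isPreconnected
      Y₁ (Y₂ ∪ Y₃) hc1 (hc2.union hc3) hCcov ⟨c, hcC, hcY⟩ ⟨p, hpC, hp23⟩
    rcases hq23 with hq2|hq3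
    · have hqball : q ∈ ball d (1/(n+1)) := h12 ⟨hq1, hq2⟩
      have h5 : dist d q < 1/((n:ℝ)+1) := by
        rw [← dist_comm q d]; exact mem_ball.mp hqball
      have h6 : infDist d C ≤ dist d q := infDist_le_dist_of_mem hqC
      have h7 : (1:ℝ)/(n+1) < min (infDist c D) (infDist d C) := hn
      have := min_le_right (infDist c D) (infDist d C)
      linarith
    · have : q ∈ Y₁ ∩ Y₃ := ⟨hq1, hq3⟩
      rw [h13] at this
      exact absurd this (notMem_empty q)

end BingFinal

/-- Bing: in a metrizable continuum, any two disjoint closed sets have disjoint open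
neighbourhoods whose complement is hereditarily indecomposable. -/
theorem exists_hereditarilyIndecomposable_partition
    (X : Type*) [TopologicalSpace X] [TopologicalSpace.MetrizableSpace X]
    [CompactSpace X] [ConnectedSpace X]
    (F₀ F₁ : Set X) (h₀ : IsClosed F₀) (h₁ : IsClosed F₁) (hd : Disjoint F₀ F₁) :
    ∃ W₀ W₁ : Set X, IsOpen W₀ ∧ IsOpen W₁ ∧ Disjoint W₀ W₁ ∧ F₀ ⊆ W₀ ∧ F₁ ⊆ W₁ ∧
      HereditarilyIndecomposable ↥((W₀ ∪ W₁)ᶜ) := by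
  letI : MetricSpace X := TopologicalSpace.metrizableSpaceMetric X
  haveI : BaireSpace C(X, ℝ) := BaireSpace.of_completelyPseudoMetrizable
  obtain ⟨u, hu0, hu1, hum⟩ := exists_continuous_zero_one_of_isClosed h₀ h₁ hd
  have hdense : Dense (⋂ n : ℕ, GSet X n) :=
    dense_iInter_of_isOpen (fun n => GSet_open n) (fun n => GSet_dense n)
  obtain ⟨g, hgmem, hgball⟩ := hdense.exists_mem_open (Metric.isOpen_ball (x := u) (ε := 1/2))
    ((Metric.nonempty_ball (x := u) (ε := 1/2)).mpr (by norm_num))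
  have hg : ∀ n, g ∈ GSet X n := fun n => mem_iInter.mp hgmem n
  have hgu : dist g u < 1/2 := Metric.mem_ball.mp hgball
  have hclose : ∀ x : X, |g x - u x| < 1/2 := by
    intro x
    have := ContinuousMap.dist_apply_le_dist (f := g) (g := u) x
    rw [Real.dist_eq] at this
    linarith
  refine ⟨g ⁻¹' (Iio (1/2)), g ⁻¹' (Ioi (1/2)),
    isOpen_Iio.preimage (map_continuous g), isOpen_Ioi.preimage (map_continuous g), ?_, ?_, ?_, ?_⟩
  · rw [Set.disjoint_left]
    intro p hp hp'
    rw [mem_preimage, mem_Iio] at hp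
    rw [mem_preimage, mem_Ioi] at hp'
    linarith
  · intro x hx
    have h1 : u x = 0 := hu0 hx
    have := hclose x
    rw [h1, sub_zero] at this
    rw [mem_preimage, mem_Iio]
    rcases abs_lt.mp this with ⟨_, h2⟩
    linarith
  · intro x hx
    have h1 : u x = 1 := hu1 hx
    have := hclose x
    rw [h1] at this
    rw [mem_preimage, mem_Ioi]
    rcases abs_lt.mp this with ⟨h2, _⟩
    linarith
  · -- hereditary indecomposability of the fibre
    intro CC DD hCc hCconn hDc hDconn hCD
    have hKfib : ∀ z : ((g ⁻¹' (Iio (1/2)) ∪ g ⁻¹' (Ioi (1/2)))ᶜ : Set X), g (z : X) = 1/2 := by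
      rintro ⟨z, hz⟩
      rw [Set.mem_compl_iff, Set.mem_union] at hz
      push_neg at hz
      obtain ⟨hz1, hz2⟩ := hz
      rw [mem_preimage, mem_Iio] at hz1
      rw [mem_preimage, mem_Ioi] at hz2
      push_neg at hz1 hz2
      exact le_antisymm hz2 hz1
    have hres := fiber_nested g hg (1/2) (Subtype.val '' CC) (Subtype.val '' DD)
      (hCc.image continuous_subtype_val)
      (hCconn.image _ continuous_subtype_val.continuousOn)
      (hDc.image continuous_subtype_val)
      (hDconn.image _ continuous_subtype_val.continuousOn)
      (by rintro _ ⟨z, hz, rfl⟩; exact hKfib z)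
      (by rintro _ ⟨z, hz, rfl⟩; exact hKfib z)
      (by obtain ⟨p, hp1, hp2⟩ := hCD; exact ⟨(p : X), ⟨p, hp1, rfl⟩, ⟨p, hp2, rfl⟩⟩)
    rcases hres with h|h
    · left
      intro z hz
      obtain ⟨w, hwD, hw⟩ := h ⟨z, hz, rfl⟩
      rwa [Subtype.coe_injective hw] at hwD
    · right
      intro z hz
      obtain ⟨w, hwC, hw⟩ := h ⟨z, hz, rfl⟩
      rwa [Subtype.coe_injective hw] at hwC
end

section
/- Let 𝕃 denote the long segment and let L be any partition between {0} × 𝕃 and {1} × 𝕃 in the product [0,1] × 𝕃. Then L contains a homeomorphic copy of the unit interval [0,1]. -/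
open Set

/-- `L` is a partition between `A` and `B`: a closed set whose complement is the
union of two disjoint open sets containing `A` and `B` respectively. -/
def IsPartitionBetween {X : Type*} [TopologicalSpace X] (L A B : Set X) : Prop :=
  IsClosed L ∧ ∃ U V : Set X, IsOpen U ∧ IsOpen V ∧ Disjoint U V ∧
    A ⊆ U ∧ B ⊆ V ∧ Lᶜ = U ∪ V

/-- The long segment: the lexicographic product `ω₁ × [0,1)` with a greatest element
adjoined, carrying the order topology. -/
def LongSegment : Type :=
  WithTop ((Cardinal.aleph 1).ord.ToType ×ₗ ↥(Set.Ico (0 : ℝ) 1))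

noncomputable instance : LinearOrder LongSegment :=
  inferInstanceAs (LinearOrder (WithTop ((Cardinal.aleph 1).ord.ToType ×ₗ ↥(Set.Ico (0 : ℝ) 1))))

noncomputable instance : TopologicalSpace LongSegment := Preorder.topology LongSegment

instance : OrderTopology LongSegment := ⟨rfl⟩

namespace LSAux

abbrev W : Type := (Cardinal.aleph 1).ord.ToType
abbrev R01 : Type := ↥(Set.Ico (0 : ℝ) 1)
abbrev P : Type := W ×ₗ R01

def ofW (x : WithTop P) : LongSegment := x
def toW (x : LongSegment) : WithTop P := x

noncomputable def lpt (w : W) (r : R01) : LongSegment := ofW (WithTop.some (toLex (w, r)))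
noncomputable def ltop : LongSegment := ofW ⊤

lemma le_ltop (x : LongSegment) : x ≤ ltop := by
  have : toW x ≤ ⊤ := le_top
  exact this

lemma lpt_lt_ltop (w : W) (r : R01) : lpt w r < ltop := by
  have : (WithTop.some (toLex (w,r)) : WithTop P) < ⊤ := WithTop.coe_lt_top _
  exact this

lemma exists_eq_lpt_of_lt_ltop {x : LongSegment} (h : x < ltop) : ∃ w r, x = lpt w r := by
  have h' : toW x < ⊤ := h
  obtain ⟨p, hp⟩ := WithTop.ne_top_iff_exists.1 h'.ne
  exact ⟨(ofLex p).1, (ofLex p).2, hp.symm⟩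

lemma lpt_lt_lpt_iff {w w' : W} {r r' : R01} :
    lpt w r < lpt w' r' ↔ w < w' ∨ (w = w' ∧ r < r') := by
  have : ((WithTop.some (toLex (w,r)) : WithTop P) < WithTop.some (toLex (w',r'))) ↔
      (w < w' ∨ (w = w' ∧ r < r')) := by
    rw [WithTop.coe_lt_coe]
    exact Prod.Lex.lt_iff
  exact this

lemma lpt_le_lpt_iff {w w' : W} {r r' : R01} :
    lpt w r ≤ lpt w' r' ↔ w < w' ∨ (w = w' ∧ r ≤ r') := by
  have : ((WithTop.some (toLex (w,r)) : WithTop P) ≤ WithTop.some (toLex (w',r'))) ↔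
      (w < w' ∨ (w = w' ∧ r ≤ r')) := by
    rw [WithTop.coe_le_coe]
    exact Prod.Lex.le_iff
  exact this

lemma not_ltop_lt (x : LongSegment) : ¬ ltop < x := not_lt.2 (le_ltop x)


noncomputable def eIso := Ordinal.ToType.mk (o := (Cardinal.aleph 1).ord)

lemma o1_isLimit : Order.IsSuccLimit ((Cardinal.aleph 1).ord) :=
  Cardinal.isSuccLimit_ord (Cardinal.aleph0_le_aleph 1)

lemma W_noMax (w : W) : ∃ w' : W, w < w' := by
  refine ⟨eIso ⟨Order.succ (eIso.symm w).1, Set.mem_Iio.2 (o1_isLimit.succ_lt (Set.mem_Iio.1 (eIso.symm w).2))⟩, ?_⟩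
  conv_lhs => rw [← eIso.apply_symm_apply w]
  rw [eIso.lt_iff_lt]
  have : ((eIso.symm w) : Ordinal) < Order.succ (eIso.symm w).1 := Order.lt_succ _
  exact this

def r0 : R01 := ⟨0, by norm_num⟩

noncomputable def rup (r : R01) : R01 := ⟨(r.1+1)/2, by
  constructor
  · have := r.2.1; linarith
  · have := r.2.2; linarith⟩

lemma lt_rup (r : R01) : r < rup r := by
  have h : r.1 < (r.1+1)/2 := by have := r.2.2; linarith
  exact h

noncomputable def rmid {r s : R01} (h : r < s) : R01 := ⟨(r.1+s.1)/2, by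
  constructor
  · have := r.2.1; have := s.2.1; linarith
  · have := r.2.2; have := s.2.2; linarith⟩

lemma rmid_lt {r s : R01} (h : r < s) : r < rmid h ∧ rmid h < s := by
  have h' : r.1 < s.1 := h
  constructor
  · have : r.1 < (r.1+s.1)/2 := by linarith
    exact this
  · have : (r.1+s.1)/2 < s.1 := by linarith
    exact this

lemma countable_bound (f : ℕ → LongSegment) (hf : ∀ n, f n < ltop) :
    ∃ a, a < ltop ∧ ∀ n, f n ≤ a := by
  choose w r hw using fun n => exists_eq_lpt_of_lt_ltop (hf n)
  set u : ℕ → Ordinal := fun n => (eIso.symm (w n)).1 with hu_def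
  have hu : ∀ n, u n < (Cardinal.aleph 1).ord := fun n => (eIso.symm (w n)).2
  have hsup : iSup u < (Cardinal.aleph 1).ord := by
    apply Ordinal.iSup_lt_ord _ hu
    rw [Cardinal.isRegular_aleph_one.cof_eq, Cardinal.mk_nat]
    exact Cardinal.aleph0_lt_aleph_one
  set β : W := eIso ⟨Order.succ (iSup u), o1_isLimit.succ_lt hsup⟩ with hβ
  refine ⟨lpt β r0, lpt_lt_ltop _ _, fun n => ?_⟩
  rw [hw n, lpt_le_lpt_iff]
  left
  conv_lhs => rw [← eIso.apply_symm_apply (w n)]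
  rw [eIso.lt_iff_lt]
  have : u n < Order.succ (iSup u) := lt_of_le_of_lt (Ordinal.le_iSup u n) (Order.lt_succ _)
  exact this

instance : DenselyOrdered LongSegment := by
  constructor
  intro a b hab
  have ha : a < ltop := lt_of_lt_of_le hab (le_ltop b)
  obtain ⟨w, r, rfl⟩ := exists_eq_lpt_of_lt_ltop ha
  rcases eq_or_lt_of_le (le_ltop b) with hb | hb
  · exact ⟨lpt w (rup r), by rw [lpt_lt_lpt_iff]; exact Or.inr ⟨rfl, lt_rup r⟩,
      by rw [hb]; exact lpt_lt_ltop _ _⟩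
  · obtain ⟨w', r', rfl⟩ := exists_eq_lpt_of_lt_ltop hb
    rcases lpt_lt_lpt_iff.1 hab with h | ⟨rfl, h⟩
    · exact ⟨lpt w (rup r), by rw [lpt_lt_lpt_iff]; exact Or.inr ⟨rfl, lt_rup r⟩,
        by rw [lpt_lt_lpt_iff]; exact Or.inl h⟩
    · exact ⟨lpt w (rmid h), by rw [lpt_lt_lpt_iff]; exact Or.inr ⟨rfl, (rmid_lt h).1⟩,
        by rw [lpt_lt_lpt_iff]; exact Or.inr ⟨rfl, (rmid_lt h).2⟩⟩


lemma exists_isLUB (S : Set LongSegment) (hS : S.Nonempty) : ∃ m, IsLUB S m := by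
  by_cases hb : ∃ b, b < ltop ∧ b ∈ upperBounds S
  · obtain ⟨b, hbt, hbS⟩ := hb
    obtain ⟨b1, b2, rfl⟩ := exists_eq_lpt_of_lt_ltop hbt
    -- every element of S is an lpt
    have hdec : ∀ x ∈ S, ∃ γ ρ, x = lpt γ ρ := fun x hx =>
      exists_eq_lpt_of_lt_ltop (lt_of_le_of_lt (hbS hx) (lpt_lt_ltop _ _))
    set A : Set W := {γ | ∃ ρ, lpt γ ρ ∈ S} with hA
    have hAne : A.Nonempty := by
      obtain ⟨x, hx⟩ := hS
      obtain ⟨γ, ρ, rfl⟩ := hdec x hx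
      exact ⟨γ, ρ, hx⟩
    have hAub : ∀ γ ∈ A, γ ≤ b1 := by
      rintro γ ⟨ρ, hγ⟩
      rcases lpt_le_lpt_iff.1 (hbS hγ) with h | ⟨h, _⟩
      · exact le_of_lt h
      · exact le_of_eq h
    have hwf : WellFounded ((· < ·) : W → W → Prop) := (IsWellFounded.wf)
    have hUBne : (upperBounds A).Nonempty := ⟨b1, fun γ hγ => hAub γ hγ⟩
    set α : W := hwf.min (upperBounds A) hUBne with hα
    have hαub : α ∈ upperBounds A := hwf.min_mem _ hUBne
    have hαleast : ∀ β ∈ upperBounds A, α ≤ β := fun β hβ => not_lt.1 (hwf.not_lt_min _ hβ)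
    -- elements of S with first coordinate γ < α are ≤ anything with first coord α
    set T : Set ℝ := {x | ∃ hx : x ∈ Set.Ico (0:ℝ) 1, lpt α ⟨x, hx⟩ ∈ S} with hT
    by_cases hTne : T.Nonempty
    · by_cases hTb : ∃ s : R01, ∀ x ∈ T, x ≤ s.1
      · obtain ⟨s, hs⟩ := hTb
        have hTbdd : BddAbove T := ⟨s.1, fun x hx => hs x hx⟩
        have hρmem : sSup T ∈ Set.Ico (0:ℝ) 1 := by
          obtain ⟨x, hx⟩ := id hTne
          constructor
          · exact le_trans hx.1.1 (le_csSup hTbdd hx)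
          · exact lt_of_le_of_lt (csSup_le hTne hs) s.2.2
        refine ⟨lpt α ⟨sSup T, hρmem⟩, ?_, ?_⟩
        · rintro x hx
          obtain ⟨γ, ρ, rfl⟩ := hdec x hx
          rw [lpt_le_lpt_iff]
          rcases eq_or_lt_of_le (hαub ⟨ρ, hx⟩) with h | h
          · refine Or.inr ⟨h, ?_⟩
            have : ρ.1 ≤ sSup T := le_csSup hTbdd (by subst h; exact ⟨ρ.2, hx⟩)
            exact this
          · exact Or.inl h
        · rintro c hc
          rcases eq_or_lt_of_le (le_ltop c) with rfl | hct
          · exact le_ltop _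
          obtain ⟨δ, σ, rfl⟩ := exists_eq_lpt_of_lt_ltop hct
          have hδ : α ≤ δ := hαleast δ (by
            rintro γ ⟨ρ, hγ⟩
            rcases lpt_le_lpt_iff.1 (hc hγ) with h | ⟨h, _⟩
            · exact le_of_lt h
            · exact le_of_eq h)
          rcases eq_or_lt_of_le hδ with rfl | h
          · rw [lpt_le_lpt_iff]
            refine Or.inr ⟨rfl, ?_⟩
            have : sSup T ≤ σ.1 := csSup_le hTne (by
              rintro x ⟨hx, hmem⟩
              rcases lpt_le_lpt_iff.1 (hc hmem) with h' | ⟨_, h'⟩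
              · exact absurd h' (lt_irrefl _)
              · exact h')
            exact this
          · rw [lpt_le_lpt_iff]; exact Or.inl h
      · -- T unbounded in [0,1): lub is (α⁺, 0)
        have hsucc_ne : {γ : W | α < γ}.Nonempty := W_noMax α
        set αs : W := hwf.min _ hsucc_ne with hαs
        have hαs_mem : α < αs := hwf.min_mem _ hsucc_ne
        refine ⟨lpt αs r0, ?_, ?_⟩
        · rintro x hx
          obtain ⟨γ, ρ, rfl⟩ := hdec x hx
          rw [lpt_le_lpt_iff]
          exact Or.inl (lt_of_le_of_lt (hαub ⟨ρ, hx⟩) hαs_mem)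
        · rintro c hc
          rcases eq_or_lt_of_le (le_ltop c) with rfl | hct
          · exact le_ltop _
          obtain ⟨δ, σ, rfl⟩ := exists_eq_lpt_of_lt_ltop hct
          have hδ : α ≤ δ := hαleast δ (by
            rintro γ ⟨ρ, hγ⟩
            rcases lpt_le_lpt_iff.1 (hc hγ) with h | ⟨h, _⟩
            · exact le_of_lt h
            · exact le_of_eq h)
          rcases eq_or_lt_of_le hδ with rfl | h
          · exfalso
            apply hTb
            refine ⟨σ, ?_⟩
            rintro x ⟨hx, hmem⟩
            rcases lpt_le_lpt_iff.1 (hc hmem) with h' | ⟨_, h'⟩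
            · exact absurd h' (lt_irrefl _)
            · exact h'
          · have hδ2 : αs ≤ δ := not_lt.1 (hwf.not_lt_min _ h)
            rw [lpt_le_lpt_iff]
            rcases eq_or_lt_of_le hδ2 with rfl | h2
            · exact Or.inr ⟨rfl, σ.2.1⟩
            · exact Or.inl h2
    · -- T empty : lub is (α, 0)
      refine ⟨lpt α r0, ?_, ?_⟩
      · rintro x hx
        obtain ⟨γ, ρ, rfl⟩ := hdec x hx
        rw [lpt_le_lpt_iff]
        rcases eq_or_lt_of_le (hαub ⟨ρ, hx⟩) with h | h
        · exact absurd ⟨ρ.2, by subst h; exact hx⟩ (fun hmem => hTne ⟨ρ.1, hmem⟩)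
        · exact Or.inl h
      · rintro c hc
        rcases eq_or_lt_of_le (le_ltop c) with rfl | hct
        · exact le_ltop _
        obtain ⟨δ, σ, rfl⟩ := exists_eq_lpt_of_lt_ltop hct
        have hδ : α ≤ δ := hαleast δ (by
          rintro γ ⟨ρ, hγ⟩
          rcases lpt_le_lpt_iff.1 (hc hγ) with h | ⟨h, _⟩
          · exact le_of_lt h
          · exact le_of_eq h)
        rw [lpt_le_lpt_iff]
        rcases eq_or_lt_of_le hδ with rfl | h
        · exact Or.inr ⟨rfl, σ.2.1⟩
        · exact Or.inl h
  · refine ⟨ltop, fun x hx => le_ltop x, fun c hc => ?_⟩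
    by_contra hlt
    exact hb ⟨c, not_le.1 hlt, hc⟩


lemma lpt_inj {w w' : W} {r r' : R01} (h : lpt w r = lpt w' r') : w = w' ∧ r = r' := by
  have h1 : lpt w r ≤ lpt w' r' := le_of_eq h
  have h2 : lpt w' r' ≤ lpt w r := le_of_eq h.symm
  rcases lpt_le_lpt_iff.1 h1 with h1' | ⟨h1', h1''⟩ <;>
    rcases lpt_le_lpt_iff.1 h2 with h2' | ⟨h2', h2''⟩
  · exact absurd (h1'.trans h2') (lt_irrefl _)
  · exact absurd h1' (h2' ▸ lt_irrefl _)
  · exact absurd h2' (h1' ▸ lt_irrefl _)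
  · exact ⟨h1', le_antisymm h1'' h2''⟩

lemma exists_lt_ltop : ∃ a : LongSegment, a < ltop :=
  ⟨lpt (eIso ⟨0, Set.mem_Iio.2 o1_isLimit.pos⟩) r0, lpt_lt_ltop _ _⟩

lemma order_separation {α : Type*} [LinearOrder α] [TopologicalSpace α] [OrderTopology α]
    [DenselyOrdered α]
    (hlub : ∀ S : Set α, S.Nonempty → ∃ m, IsLUB S m)
    {U' V' : Set α} (hU : IsOpen U') (hV : IsOpen V') (hd : Disjoint U' V')
    {u v : α} (hu : u ∈ U') (hv : v ∈ V') (huv : u < v) :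
    ∃ y, u ≤ y ∧ y ≤ v ∧ y ∉ U' ∧ y ∉ V' := by
  set S : Set α := {y | y ∈ Icc u v ∧ Icc u y ⊆ U'} with hSdef
  have huS : u ∈ S := by
    refine ⟨⟨le_refl u, le_of_lt huv⟩, ?_⟩
    rw [Icc_self]
    intro z hz
    rw [mem_singleton_iff.1 hz]
    exact hu
  obtain ⟨m, hm⟩ := hlub S ⟨u, huS⟩
  have hum : u ≤ m := hm.1 huS
  have hmv : m ≤ v := hm.2 (fun z hz => hz.1.2)
  have hbelow : ∀ p, u ≤ p → p < m → p ∈ U' := by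
    intro p hup hpm
    obtain ⟨z, hzS, hpz⟩ : ∃ z ∈ S, p < z := by
      by_contra hcon
      push_neg at hcon
      exact absurd (hm.2 hcon) (not_le.2 hpm)
    exact hzS.2 ⟨hup, le_of_lt hpz⟩
  refine ⟨m, hum, hmv, ?_, ?_⟩
  · intro hmU
    have hmv' : m < v := lt_of_le_of_ne hmv (by rintro rfl; exact Set.disjoint_left.1 hd hmU hv)
    obtain ⟨c, hmc, hc⟩ := exists_Ico_subset_of_mem_nhds (hU.mem_nhds hmU) ⟨v, hmv'⟩
    obtain ⟨z, hz1, hz2⟩ := exists_between (lt_min hmc hmv')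
    have hzS : z ∈ S := by
      refine ⟨⟨le_trans hum (le_of_lt hz1), le_of_lt (lt_of_lt_of_le hz2 (min_le_right _ _))⟩, ?_⟩
      intro p hp
      rcases lt_or_ge p m with h | h
      · exact hbelow p hp.1 h
      · exact hc ⟨h, lt_of_le_of_lt hp.2 (lt_of_lt_of_le hz2 (min_le_left _ _))⟩
    exact absurd (hm.1 hzS) (not_le.2 hz1)
  · intro hmV
    have hum' : u < m := lt_of_le_of_ne hum (by rintro rfl; exact Set.disjoint_left.1 hd hu hmV)
    obtain ⟨l, hlm, hl⟩ := exists_Ioc_subset_of_mem_nhds (hV.mem_nhds hmV) ⟨u, hum'⟩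
    have hmax : max l u < m := max_lt hlm hum'
    obtain ⟨z, hzS, hz⟩ : ∃ z ∈ S, max l u < z := by
      by_contra hcon
      push_neg at hcon
      exact absurd (hm.2 hcon) (not_le.2 hmax)
    have hzU : z ∈ U' := hzS.2 ⟨hzS.1.1, le_refl z⟩
    have hzV : z ∈ V' := hl ⟨lt_of_le_of_lt (le_max_left _ _) hz, hm.1 hzS⟩
    exact absurd hzV (fun h => Set.disjoint_left.1 hd hzU h)


lemma vertical_embedding (L : Set (unitInterval × LongSegment)) (t : unitInterval)
    {a : LongSegment} (ha : a < ltop)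
    (hL : ∀ y, a < y → y < ltop → (t, y) ∈ L) :
    ∃ f : unitInterval → unitInterval × LongSegment, Topology.IsEmbedding f ∧ range f ⊆ L := by
  obtain ⟨w0, rr, rfl⟩ := exists_eq_lpt_of_lt_ltop ha
  obtain ⟨β, hβ⟩ := W_noMax w0
  have hmem : ∀ s : unitInterval, s.1/2 ∈ Set.Ico (0:ℝ) 1 := fun s =>
    ⟨by have := s.2.1; linarith, by have := s.2.2; linarith⟩
  set g : unitInterval → LongSegment := fun s => lpt β ⟨s.1/2, hmem s⟩ with hg
  have hgcont : Continuous g := by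
    rw [continuous_iff_continuousAt]
    intro s₀
    rw [ContinuousAt, tendsto_order]
    constructor
    · intro b hb
      obtain ⟨γ, ρ, rfl⟩ := exists_eq_lpt_of_lt_ltop (lt_trans hb (lpt_lt_ltop _ _))
      rcases lpt_lt_lpt_iff.1 hb with h | ⟨rfl, h⟩
      · exact Filter.Eventually.of_forall (fun s => lpt_lt_lpt_iff.2 (Or.inl h))
      · have ho : IsOpen {s : unitInterval | ρ.1 < s.1/2} :=
          isOpen_lt continuous_const (continuous_subtype_val.div_const 2)
        have hs₀ : s₀ ∈ {s : unitInterval | ρ.1 < s.1/2} := h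
        refine Filter.eventually_of_mem (ho.mem_nhds hs₀) (fun s hs => ?_)
        exact lpt_lt_lpt_iff.2 (Or.inr ⟨rfl, hs⟩)
    · intro b hb
      rcases eq_or_lt_of_le (le_ltop b) with rfl | hbt
      · exact Filter.Eventually.of_forall (fun s => lpt_lt_ltop _ _)
      · obtain ⟨γ, ρ, rfl⟩ := exists_eq_lpt_of_lt_ltop hbt
        rcases lpt_lt_lpt_iff.1 hb with h | ⟨rfl, h⟩
        · exact Filter.Eventually.of_forall (fun s => lpt_lt_lpt_iff.2 (Or.inl h))
        · have ho : IsOpen {s : unitInterval | s.1/2 < ρ.1} :=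
            isOpen_lt (continuous_subtype_val.div_const 2) continuous_const
          have hs₀ : s₀ ∈ {s : unitInterval | s.1/2 < ρ.1} := h
          refine Filter.eventually_of_mem (ho.mem_nhds hs₀) (fun s hs => ?_)
          exact lpt_lt_lpt_iff.2 (Or.inr ⟨rfl, hs⟩)
  have hginj : Function.Injective g := by
    intro s s' h
    have h2 := congrArg Subtype.val (lpt_inj h).2
    simp only at h2
    exact Subtype.ext (by linarith)
  refine ⟨fun s => (t, g s), ?_, ?_⟩
  · exact ((continuous_const.prodMk hgcont).isClosedEmbedding
      (fun s s' h => hginj (congrArg Prod.snd h))).toIsEmbedding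
  · rintro p ⟨s, rfl⟩
    exact hL (g s) (lpt_lt_lpt_iff.2 (Or.inl hβ)) (lpt_lt_ltop _ _)

end LSAux

open LSAux Topology Filter

/-- Every partition between `{0} × 𝕃` and `{1} × 𝕃` in `[0,1] × 𝕃` contains a copy of
the unit interval. -/
theorem partition_longSegment_contains_interval
    (L : Set (unitInterval × LongSegment))
    (hL : IsPartitionBetween L {p | p.1 = 0} {p | p.1 = 1}) :
    ∃ f : unitInterval → unitInterval × LongSegment,
      Topology.IsEmbedding f ∧ range f ⊆ L := by
  obtain ⟨hLc, U, V, hU, hV, hUV, hAU, hBV, hcomp⟩ := hL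
  have hmemL : ∀ p : unitInterval × LongSegment, p ∉ U → p ∉ V → p ∈ L := by
    intro p h1 h2
    by_contra h
    have h' : p ∈ U ∪ V := by rw [← hcomp]; exact h
    rcases h' with h' | h'
    exacts [h1 h', h2 h']
  set EU : Set unitInterval :=
    {t | ∃ a, a < ltop ∧ ∀ y, a < y → y < ltop → (t, y) ∉ V} with hEUdef
  set EV : Set unitInterval :=
    {t | ∃ a, a < ltop ∧ ∀ y, a < y → y < ltop → (t, y) ∉ U} with hEVdef
  by_cases hcl : (closure EU ∩ closure EV).Nonempty
  · -- vertical case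
    obtain ⟨t, htU, htV⟩ := hcl
    obtain ⟨su, hsu_mem, hsu_lim⟩ := mem_closure_iff_seq_limit.1 htU
    obtain ⟨sv, hsv_mem, hsv_lim⟩ := mem_closure_iff_seq_limit.1 htV
    choose au hau1 hau2 using hsu_mem
    choose av hav1 hav2 using hsv_mem
    obtain ⟨aU, haU, haU2⟩ := countable_bound au hau1
    obtain ⟨aV, haV, haV2⟩ := countable_bound av hav1
    refine vertical_embedding L t (max_lt haU haV) ?_
    intro y hy hyt
    apply hmemL
    · have hUc : IsClosed Uᶜ := hU.isClosed_compl
      have htnd : Filter.Tendsto (fun n => ((sv n, y) : unitInterval × LongSegment))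
          Filter.atTop (𝓝 (t, y)) := hsv_lim.prodMk_nhds tendsto_const_nhds
      exact hUc.mem_of_tendsto htnd (Filter.Eventually.of_forall (fun n =>
        hav2 n y (lt_of_le_of_lt ((haV2 n).trans (le_max_right aU aV)) hy) hyt))
    · have hVc : IsClosed Vᶜ := hV.isClosed_compl
      have htnd : Filter.Tendsto (fun n => ((su n, y) : unitInterval × LongSegment))
          Filter.atTop (𝓝 (t, y)) := hsu_lim.prodMk_nhds tendsto_const_nhds
      exact hVc.mem_of_tendsto htnd (Filter.Eventually.of_forall (fun n =>
        hau2 n y (lt_of_le_of_lt ((haU2 n).trans (le_max_left aU aV)) hy) hyt))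
  · -- horizontal case
    have h0 : (0:unitInterval) ∈ EU := by
      obtain ⟨a0, ha0⟩ := exists_lt_ltop
      exact ⟨a0, ha0, fun y _ _ hyV => Set.disjoint_left.1 hUV (hAU rfl) hyV⟩
    have h1 : (1:unitInterval) ∈ EV := by
      obtain ⟨a0, ha0⟩ := exists_lt_ltop
      exact ⟨a0, ha0, fun y _ _ hyU => Set.disjoint_left.1 hUV hyU (hBV rfl)⟩
    have hconn : ∃ t₀ : unitInterval, t₀ ∉ closure EU ∧ t₀ ∉ closure EV := by
      have hpc : IsPreconnected (univ : Set unitInterval) := isPreconnected_univ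
      have hsub : (univ : Set unitInterval) ⊆ (closure EU)ᶜ ∪ (closure EV)ᶜ := by
        intro x _
        by_contra hx
        rw [mem_union, not_or] at hx
        exact hcl ⟨x, not_not.1 hx.1, not_not.1 hx.2⟩
      obtain ⟨x, hx⟩ := hpc _ _ isClosed_closure.isOpen_compl isClosed_closure.isOpen_compl hsub
        ⟨1, mem_univ 1, fun h => hcl ⟨1, h, subset_closure h1⟩⟩
        ⟨0, mem_univ 0, fun h => hcl ⟨0, subset_closure h0, h⟩⟩
      exact ⟨x, hx.2.1, hx.2.2⟩
    obtain ⟨t₀, ht₀U, ht₀V⟩ := hconn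
    have hO : IsOpen ((closure EU)ᶜ ∩ (closure EV)ᶜ) :=
      isClosed_closure.isOpen_compl.inter isClosed_closure.isOpen_compl
    obtain ⟨ε, hε, hball⟩ := Metric.isOpen_iff.1 hO t₀ ⟨ht₀U, ht₀V⟩
    have ht0pos : 0 < t₀.1 := by
      rcases lt_or_eq_of_le t₀.2.1 with h | h
      · exact h
      · have : t₀ = 0 := Subtype.ext h.symm
        rw [this] at ht₀U
        exact absurd (subset_closure h0) ht₀U
    have ht0lt1 : t₀.1 < 1 := by
      rcases lt_or_eq_of_le t₀.2.2 with h | h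
      · exact h
      · have : t₀ = 1 := Subtype.ext h
        rw [this] at ht₀V
        exact absurd (subset_closure h1) ht₀V
    set δ : ℝ := min (ε/2) (min t₀.1 (1 - t₀.1)) with hδdef
    have hδpos : 0 < δ := lt_min (by linarith) (lt_min ht0pos (by linarith))
    have hδε : δ < ε := lt_of_le_of_lt (min_le_left _ _) (by linarith)
    have hδt : δ ≤ t₀.1 := le_trans (min_le_right _ _) (min_le_left _ _)
    have hδt' : δ ≤ 1 - t₀.1 := le_trans (min_le_right _ _) (min_le_right _ _)
    set cr : ℝ := t₀.1 - δ with hcrdef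
    set dr : ℝ := t₀.1 + δ with hdrdef
    have hcr0 : 0 ≤ cr := by rw [hcrdef]; linarith
    have hdr1 : dr ≤ 1 := by rw [hdrdef]; linarith
    have hcrdr : cr < dr := by rw [hcrdef, hdrdef]; linarith
    have hmemI : ∀ x : ℝ, cr ≤ x → x ≤ dr → x ∈ Set.Icc (0:ℝ) 1 :=
      fun x hx1 hx2 => ⟨le_trans hcr0 hx1, le_trans hx2 hdr1⟩
    have hin : ∀ x : unitInterval, cr ≤ x.1 → x.1 ≤ dr → (x ∉ EU ∧ x ∉ EV) := by
      intro x hx1 hx2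
      have hd : dist x t₀ < ε := by
        rw [Subtype.dist_eq, Real.dist_eq]
        refine lt_of_le_of_lt (abs_le.2 ⟨by rw [hcrdef] at hx1; linarith, by rw [hdrdef] at hx2; linarith⟩) hδε
      have hxO := hball hd
      exact ⟨fun h => hxO.1 (subset_closure h), fun h => hxO.2 (subset_closure h)⟩
    have club : ∀ x : unitInterval, x ∉ EU → x ∉ EV →
        ∀ z, z < ltop → ∃ y, z < y ∧ y < ltop ∧ (x, y) ∈ L := by
      intro x hxU hxV z hz
      have hUpts : ∀ b, b < ltop → ∃ y, b < y ∧ y < ltop ∧ (x, y) ∈ U := by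
        intro b hb
        by_contra hcon
        push_neg at hcon
        exact hxV ⟨b, hb, hcon⟩
      have hVpts : ∀ b, b < ltop → ∃ y, b < y ∧ y < ltop ∧ (x, y) ∈ V := by
        intro b hb
        by_contra hcon
        push_neg at hcon
        exact hxU ⟨b, hb, hcon⟩
      obtain ⟨u, hzu, hut, huU⟩ := hUpts z hz
      obtain ⟨v, huv, hvt, hvV⟩ := hVpts u hut
      have hUopen : IsOpen {y : LongSegment | (x, y) ∈ U} :=
        hU.preimage (continuous_const.prodMk continuous_id)
      have hVopen : IsOpen {y : LongSegment | (x, y) ∈ V} :=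
        hV.preimage (continuous_const.prodMk continuous_id)
      have hdisj : Disjoint {y : LongSegment | (x, y) ∈ U} {y : LongSegment | (x, y) ∈ V} :=
        Set.disjoint_left.2 fun y hy1 hy2 => Set.disjoint_left.1 hUV hy1 hy2
      obtain ⟨y, hyu, hyv, hyU, hyV⟩ := order_separation exists_isLUB hUopen hVopen hdisj huU hvV huv
      exact ⟨y, lt_of_lt_of_le hzu hyu, lt_of_le_of_lt hyv hvt, hmemL _ hyU hyV⟩
    set tf : ℕ → unitInterval := fun mm =>
      if h : ((Denumerable.ofNat ℚ mm : ℚ) : ℝ) ∈ Set.Icc cr dr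
      then ⟨_, hmemI _ h.1 h.2⟩ else ⟨cr, hmemI cr le_rfl (le_of_lt hcrdr)⟩ with htfdef
    have htf_mem : ∀ mm, cr ≤ (tf mm).1 ∧ (tf mm).1 ≤ dr := by
      intro mm
      by_cases h : ((Denumerable.ofNat ℚ mm : ℚ) : ℝ) ∈ Set.Icc cr dr
      · simp only [htfdef, dif_pos h]
        exact ⟨h.1, h.2⟩
      · simp only [htfdef, dif_neg h]
        exact ⟨le_rfl, le_of_lt hcrdr⟩
    have htf_notin : ∀ mm, tf mm ∉ EU ∧ tf mm ∉ EV := fun mm => hin _ (htf_mem mm).1 (htf_mem mm).2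
    obtain ⟨a0, ha0⟩ := exists_lt_ltop
    have hstep : ∀ (k : ℕ) (z : LongSegment), z < ltop →
        ∃ y, z < y ∧ y < ltop ∧ (tf (Nat.unpair k).1, y) ∈ L := fun k z hz =>
      club _ (htf_notin _).1 (htf_notin _).2 z hz
    choose stepf hstep1 hstep2 hstep3 using hstep
    set yseq : ℕ → {z : LongSegment // z < ltop} :=
      fun k => Nat.rec (motive := fun _ => {z : LongSegment // z < ltop}) ⟨a0, ha0⟩
        (fun k ih => ⟨stepf k ih.1 ih.2, hstep2 k ih.1 ih.2⟩) k with hyseqdef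
    have hymono : StrictMono (fun k => (yseq k).1) :=
      strictMono_nat_of_lt_succ (fun k => hstep1 k (yseq k).1 (yseq k).2)
    obtain ⟨m, hmlub⟩ := exists_isLUB (range fun k => (yseq k).1) ⟨(yseq 0).1, ⟨0, rfl⟩⟩
    have htend : Filter.Tendsto (fun k => (yseq k).1) Filter.atTop (𝓝 m) :=
      tendsto_atTop_isLUB hymono.monotone hmlub
    have hqL : ∀ q : ℕ, (tf q, m) ∈ L := by
      intro q
      have hCclosed : IsClosed {y : LongSegment | (tf q, y) ∈ L} :=
        hLc.preimage (continuous_const.prodMk continuous_id)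
      have hσ : Filter.Tendsto (fun j => Nat.pair q j + 1) Filter.atTop Filter.atTop :=
        Filter.tendsto_atTop_mono (fun j => Nat.le_succ_of_le (Nat.right_le_pair q j))
          Filter.tendsto_id
      refine hCclosed.mem_of_tendsto (htend.comp hσ) (Filter.Eventually.of_forall (fun j => ?_))
      have h3 := hstep3 (Nat.pair q j) (yseq (Nat.pair q j)).1 (yseq (Nat.pair q j)).2
      rw [Nat.unpair_pair] at h3
      exact h3
    have hslice : ∀ x : unitInterval, cr ≤ x.1 → x.1 ≤ dr → (x, m) ∈ L := by
      intro x hx1 hx2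
      have hSl : IsClosed {x' : unitInterval | (x', m) ∈ L} :=
        hLc.preimage (continuous_id.prodMk continuous_const)
      have hrat : ∀ n : ℕ, ∃ x' : unitInterval, (x', m) ∈ L ∧ dist x' x < 1/(n+1) := by
        intro n
        have hpos : (0:ℝ) < 1/(n+1) := by positivity
        have hlohi : max cr (x.1 - 1/(n+1)) < min dr (x.1 + 1/(n+1)) := by
          apply max_lt
          · exact lt_min (by linarith) (by linarith)
          · exact lt_min (by linarith) (by linarith)
        obtain ⟨q, hq1, hq2⟩ := exists_rat_btwn hlohi
        have hqmem : ((q:ℚ):ℝ) ∈ Set.Icc cr dr :=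
          ⟨le_trans (le_max_left _ _) (le_of_lt hq1), le_trans (le_of_lt hq2) (min_le_left _ _)⟩
        obtain ⟨mq, hmq⟩ : ∃ mm, Denumerable.ofNat ℚ mm = q := ⟨_, Denumerable.ofNat_encode q⟩
        refine ⟨tf mq, hqL _, ?_⟩
        have hqmem' : ((Denumerable.ofNat ℚ mq : ℚ) : ℝ) ∈ Set.Icc cr dr := by
          rw [hmq]; exact hqmem
        have heq : (tf mq).1 = (q:ℝ) := by
          simp only [htfdef]
          rw [dif_pos hqmem']
          show ((Denumerable.ofNat ℚ mq : ℚ) : ℝ) = (q:ℝ)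
          rw [hmq]
        rw [Subtype.dist_eq, heq, Real.dist_eq, abs_lt]
        constructor
        · have hh : x.1 - 1/(n+1) ≤ max cr (x.1 - 1/(n+1)) := le_max_right _ _
          linarith
        · have hh : min dr (x.1 + 1/(n+1)) ≤ x.1 + 1/(n+1) := min_le_right _ _
          linarith
      choose xs hxs1 hxs2 using hrat
      have hxs_tend : Filter.Tendsto xs Filter.atTop (𝓝 x) := by
        rw [Metric.tendsto_atTop]
        intro ε' hε'
        obtain ⟨N, hN⟩ := exists_nat_one_div_lt hε'
        refine ⟨N, fun n hn => lt_of_lt_of_le (hxs2 n) (le_trans ?_ (le_of_lt hN))⟩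
        apply one_div_le_one_div_of_le
        · positivity
        · exact_mod_cast Nat.succ_le_succ hn
      exact hSl.mem_of_tendsto hxs_tend (Filter.Eventually.of_forall hxs1)
    have hfmem : ∀ s : unitInterval, cr + s.1*(dr-cr) ∈ Set.Icc (0:ℝ) 1 := by
      intro s
      refine hmemI _ ?_ ?_
      · nlinarith [s.2.1, hcrdr]
      · nlinarith [s.2.2, hcrdr]
    set f : unitInterval → unitInterval × LongSegment :=
      fun s => (⟨cr + s.1*(dr-cr), hfmem s⟩, m) with hfdef
    have hfcont : Continuous f := by
      apply Continuous.prodMk _ continuous_const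
      exact Continuous.subtype_mk
        (continuous_const.add (continuous_subtype_val.mul continuous_const)) _
    have hfinj : Function.Injective f := by
      intro s s' h
      have h1 := congrArg (fun p => (Prod.fst p).1) h
      simp only [hfdef] at h1
      have : s.1 = s'.1 := by
        have hne : dr - cr > 0 := by linarith
        nlinarith [h1]
      exact Subtype.ext this
    refine ⟨f, (hfcont.isClosedEmbedding hfinj).toIsEmbedding, ?_⟩
    rintro p ⟨s, rfl⟩
    refine hslice _ ?_ ?_
    · show cr ≤ cr + s.1*(dr-cr)
      nlinarith [s.2.1, hcrdr]
    · show cr + s.1*(dr-cr) ≤ dr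
      nlinarith [s.2.2, hcrdr]
end

section
/- Let X be a nondegenerate hereditarily indecomposable metrizable continuum and let x ∈ X. Then the family 𝒞ₓ = {C : C is a subcontinuum of X with x ∈ C} is linearly ordered by inclusion, is a closed subset of the hyperspace C(X) of subcontinua of X, its order topology and its subspace topology (from the Vietoris topology) coincide, and with this topology 𝒞ₓ is homeomorphic to the unit interval [0,1]. -/
open Set

/-- The hyperspace `C(X)` of subcontinua of a metric space `X`, with the topology
induced by the Hausdorff metric (which is the Vietoris topology for compact `X`). -/
abbrev SubcontinuaHyp (X : Type*) [MetricSpace X] : Type _ :=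
  {C : TopologicalSpace.NonemptyCompacts X // IsConnected (C : Set X)}

section AuxChain

open Metric TopologicalSpace

variable {X : Type*} [MetricSpace X]

lemma hhd_ne_top (C D : NonemptyCompacts X) :
    EMetric.hausdorffEdist (C : Set X) (D : Set X) ≠ ⊤ :=
  Metric.hausdorffEdist_ne_top_of_nonempty_of_bounded C.nonempty D.nonempty
    C.isCompact.isBounded D.isCompact.isBounded

lemma myIsClosed_superset (A : Set X) :
    IsClosed {C : NonemptyCompacts X | A ⊆ (C : Set X)} := by
  refine IsSeqClosed.isClosed ?_
  intro Cn C hCn hlim z hz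
  have hd : Filter.Tendsto (fun n => dist (Cn n) C) Filter.atTop (nhds 0) :=
    tendsto_iff_dist_tendsto_zero.mp hlim
  have hb : ∀ n, infDist z (C : Set X) ≤ dist (Cn n) C := by
    intro n
    have h1 : infDist z (C : Set X) ≤ infDist z (Cn n : Set X)
        + hausdorffDist (Cn n : Set X) (C : Set X) :=
      infDist_le_infDist_add_hausdorffDist (hhd_ne_top _ _)
    have h2 : infDist z (Cn n : Set X) = 0 := infDist_zero_of_mem (hCn n hz)
    rw [NonemptyCompacts.dist_eq]
    linarith
  have h0 : infDist z (C : Set X) ≤ 0 := ge_of_tendsto hd (Filter.Eventually.of_forall hb)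
  exact (C.isCompact.isClosed.mem_iff_infDist_zero C.nonempty).mpr
    (le_antisymm h0 infDist_nonneg)

lemma myIsClosed_subset {A : Set X} (hA : IsClosed A) :
    IsClosed {C : NonemptyCompacts X | (C : Set X) ⊆ A} := by
  refine IsSeqClosed.isClosed ?_
  intro Cn C hCn hlim z hz
  have hd : Filter.Tendsto (fun n => dist (Cn n) C) Filter.atTop (nhds 0) :=
    tendsto_iff_dist_tendsto_zero.mp hlim
  have hb : ∀ n, infDist z A ≤ dist (Cn n) C := by
    intro n
    have h1 : infDist z (Cn n : Set X) ≤ hausdorffDist (C : Set X) (Cn n : Set X) :=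
      infDist_le_hausdorffDist_of_mem hz (hhd_ne_top _ _)
    have h2 : infDist z A ≤ infDist z (Cn n : Set X) :=
      infDist_le_infDist_of_subset (hCn n) (Cn n).nonempty
    rw [hausdorffDist_comm] at h1
    rw [NonemptyCompacts.dist_eq]
    linarith
  have h0 : infDist z A ≤ 0 := ge_of_tendsto hd (Filter.Eventually.of_forall hb)
  have hAne : A.Nonempty := ⟨(Cn 0).nonempty.some, hCn 0 (Cn 0).nonempty.some_mem⟩
  exact (hA.mem_iff_infDist_zero hAne).mpr (le_antisymm h0 infDist_nonneg)

lemma myIsClosed_connected :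
    IsClosed {C : NonemptyCompacts X | IsConnected (C : Set X)} := by
  refine IsSeqClosed.isClosed ?_
  intro Cn C hCn hlim
  refine ⟨C.nonempty, ?_⟩
  by_contra hnc
  rw [IsPreconnected] at hnc
  push_neg at hnc
  obtain ⟨U, V, hU, hV, hcov, ⟨a, haC, haU⟩, ⟨b, hbC, hbV⟩, hUV⟩ := hnc
  set A : Set X := (C : Set X) ∩ U with hA
  set B : Set X := (C : Set X) ∩ V with hB
  have hUV' : ∀ z, z ∈ (C : Set X) → z ∈ U → z ∈ V → False := fun z h1 h2 h3 =>
    eq_empty_iff_forall_notMem.mp hUV z ⟨h1, h2, h3⟩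
  have hdisj : Disjoint A B := by
    rw [Set.disjoint_iff_inter_eq_empty, eq_empty_iff_forall_notMem]
    rintro z ⟨⟨hz1, hz2⟩, ⟨-, hz3⟩⟩
    exact hUV' z hz1 hz2 hz3
  have hAB : (C : Set X) = A ∪ B := by
    apply Subset.antisymm
    · intro z hz; rcases hcov hz with h | h
      · exact Or.inl ⟨hz, h⟩
      · exact Or.inr ⟨hz, h⟩
    · rintro z (⟨h, _⟩ | ⟨h, _⟩) <;> exact h
  have hAc : IsCompact A := by
    have : A = (C : Set X) \ V := by
      apply Subset.antisymm
      · rintro z ⟨h1, h2⟩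
        refine ⟨h1, fun hzV => ?_⟩
        exact hUV' z h1 h2 hzV
      · rintro z ⟨h1, h2⟩
        rcases hcov h1 with h | h
        · exact ⟨h1, h⟩
        · exact absurd h h2
    rw [this]
    exact C.isCompact.diff hV
  have hBc : IsCompact B := by
    have : B = (C : Set X) \ U := by
      apply Subset.antisymm
      · rintro z ⟨h1, h2⟩
        refine ⟨h1, fun hzU => ?_⟩
        exact hUV' z h1 hzU h2
      · rintro z ⟨h1, h2⟩
        rcases hcov h1 with h | h
        · exact absurd h h2
        · exact ⟨h1, h⟩
    rw [this]
    exact C.isCompact.diff hU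
  obtain ⟨δ, hδ, hthick⟩ := hdisj.exists_thickenings hAc hBc.isClosed
  have hd : Filter.Tendsto (fun n => dist (Cn n) C) Filter.atTop (nhds 0) :=
    tendsto_iff_dist_tendsto_zero.mp hlim
  obtain ⟨n, hn⟩ := (Filter.Tendsto.eventually_lt_const hδ hd).exists
  have hhd : hausdorffDist (Cn n : Set X) (C : Set X) < δ := by
    rw [← NonemptyCompacts.dist_eq]; exact hn
  have hcov' : (Cn n : Set X) ⊆ thickening δ A ∪ thickening δ B := by
    intro z hz
    have h1 : infDist z (C : Set X) < δ :=
      lt_of_le_of_lt (infDist_le_hausdorffDist_of_mem hz (hhd_ne_top _ _)) hhd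
    obtain ⟨c, hcC, hcd⟩ := (infDist_lt_iff C.nonempty).mp h1
    rw [hAB] at hcC
    rcases hcC with h | h
    · exact Or.inl (mem_thickening_iff.mpr ⟨c, h, hcd⟩)
    · exact Or.inr (mem_thickening_iff.mpr ⟨c, h, hcd⟩)
  have hmeet : ∀ (W : Set X), W.Nonempty → W ⊆ (C : Set X) →
      ((Cn n : Set X) ∩ thickening δ W).Nonempty := by
    rintro W ⟨w, hw⟩ hWC
    have h1 : infDist w (Cn n : Set X) < δ := by
      refine lt_of_le_of_lt ?_ hhd
      rw [hausdorffDist_comm]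
      exact infDist_le_hausdorffDist_of_mem (hWC hw) (hhd_ne_top _ _)
    obtain ⟨c, hcC, hcd⟩ := (infDist_lt_iff (Cn n).nonempty).mp h1
    exact ⟨c, hcC, mem_thickening_iff.mpr ⟨w, hw, by rwa [dist_comm]⟩⟩
  have hconn := (hCn n).2
  obtain ⟨z, -, hz1, hz2⟩ := hconn (thickening δ A) (thickening δ B)
    isOpen_thickening isOpen_thickening hcov'
    (hmeet A ⟨a, haC, haU⟩ inter_subset_left)
    (hmeet B ⟨b, hbC, hbV⟩ inter_subset_left)
  exact hthick.ne_of_mem hz1 hz2 rfl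

variable (u : ℕ → X)

/-- A "Whitney-type" functional on nonempty compacts. -/
noncomputable def gfun (C : NonemptyCompacts X) : ℝ :=
  ∑' n, (1 / 2 : ℝ) ^ n * min (infDist (u n) (C : Set X)) 1

lemma gfun_term_nonneg (C : NonemptyCompacts X) (n : ℕ) :
    0 ≤ (1 / 2 : ℝ) ^ n * min (infDist (u n) (C : Set X)) 1 :=
  mul_nonneg (by positivity) (le_min infDist_nonneg zero_le_one)

lemma gfun_term_le (C : NonemptyCompacts X) (n : ℕ) :
    (1 / 2 : ℝ) ^ n * min (infDist (u n) (C : Set X)) 1 ≤ (1 / 2 : ℝ) ^ n := by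
  nth_rewrite 2 [← mul_one ((1 / 2 : ℝ) ^ n)]
  exact mul_le_mul_of_nonneg_left (min_le_right _ _) (by positivity)

lemma gfun_summable (C : NonemptyCompacts X) :
    Summable (fun n => (1 / 2 : ℝ) ^ n * min (infDist (u n) (C : Set X)) 1) :=
  Summable.of_nonneg_of_le (gfun_term_nonneg u C) (gfun_term_le u C) summable_geometric_two

lemma continuous_infDist_hyp (z : X) :
    Continuous (fun C : NonemptyCompacts X => infDist z (C : Set X)) := by
  refine LipschitzWith.continuous (K := 1) (LipschitzWith.of_dist_le_mul fun C D => ?_)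
  rw [NNReal.coe_one, one_mul, Real.dist_eq, abs_sub_le_iff, NonemptyCompacts.dist_eq]
  constructor
  · have := infDist_le_infDist_add_hausdorffDist (x := z)
      (s := (D : Set X)) (t := (C : Set X)) (hhd_ne_top D C)
    rw [hausdorffDist_comm] at this
    linarith
  · have := infDist_le_infDist_add_hausdorffDist (x := z)
      (s := (C : Set X)) (t := (D : Set X)) (hhd_ne_top C D)
    linarith

lemma gfun_continuous : Continuous (gfun u : NonemptyCompacts X → ℝ) := by
  refine continuous_tsum (fun n => ?_) summable_geometric_two (fun n C => ?_)
  · exact continuous_const.mul ((continuous_infDist_hyp (u n)).min continuous_const)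
  · rw [Real.norm_eq_abs, abs_of_nonneg (gfun_term_nonneg u C n)]
    exact gfun_term_le u C n

lemma gfun_antitone {C D : NonemptyCompacts X} (h : (C : Set X) ⊆ (D : Set X)) :
    gfun u D ≤ gfun u C := by
  refine Summable.tsum_le_tsum (fun n => ?_) (gfun_summable u D) (gfun_summable u C)
  refine mul_le_mul_of_nonneg_left (min_le_min ?_ le_rfl) (by positivity)
  exact infDist_le_infDist_of_subset h C.nonempty

lemma gfun_strict_anti (hu : DenseRange u) {C D : NonemptyCompacts X}
    (h : (C : Set X) ⊂ (D : Set X)) : gfun u D < gfun u C := by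
  obtain ⟨z, hzD, hzC⟩ := exists_of_ssubset h
  have hδ : 0 < infDist z (C : Set X) :=
    (C.isCompact.isClosed.notMem_iff_infDist_pos C.nonempty).mp hzC
  set δ := infDist z (C : Set X) with hδdef
  set ε := min δ 1 with hε
  have hεpos : 0 < ε := lt_min hδ one_pos
  obtain ⟨n, hn⟩ := hu.exists_dist_lt z (half_pos hεpos)
  have hBn : min (infDist (u n) (D : Set X)) 1 < min (infDist (u n) (C : Set X)) 1 := by
    have h1 : infDist (u n) (D : Set X) ≤ dist (u n) z :=
      infDist_le_dist_of_mem hzD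
    have h2 : dist z (u n) < ε / 2 := hn
    have h3 : δ ≤ infDist (u n) (C : Set X) + dist z (u n) := infDist_le_infDist_add_dist
    have h4 : ε / 2 ≤ infDist (u n) (C : Set X) := by
      have : ε ≤ δ := min_le_left _ _
      linarith
    have h5 : ε / 2 ≤ (1 : ℝ) := by
      have : ε ≤ 1 := min_le_right _ _
      linarith
    have h6 : infDist (u n) (D : Set X) < ε / 2 := by
      rw [dist_comm (u n) z] at h1; linarith
    calc min (infDist (u n) (D : Set X)) 1 ≤ infDist (u n) (D : Set X) := min_le_left _ _
      _ < ε / 2 := h6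
      _ ≤ min (infDist (u n) (C : Set X)) 1 := le_min h4 h5
  refine Summable.tsum_lt_tsum_of_nonneg (fun m => gfun_term_nonneg u D m) (fun m => ?_)
    (mul_lt_mul_of_pos_left hBn (by positivity)) (gfun_summable u C)
  refine mul_le_mul_of_nonneg_left (min_le_min ?_ le_rfl) (by positivity)
  exact infDist_le_infDist_of_subset h.subset C.nonempty

/-- Between a continuum `E` and a strictly larger continuum `D` there is a continuum
strictly between. -/
lemma exists_mid {D E : Set X} (hD : IsCompact D) (hDc : IsPreconnected D)
    (hE : IsCompact E) (hEc : IsPreconnected E) (hEne : E.Nonempty)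
    (hsub : E ⊆ D) (hne : E ≠ D) {x : X} (hx : x ∈ E) :
    ∃ M : Set X, IsCompact M ∧ IsConnected M ∧ x ∈ M ∧ E ⊆ M ∧ M ≠ E ∧ M ⊆ D ∧ M ≠ D := by
  obtain ⟨p, hpD, hpE⟩ := exists_of_ssubset (hsub.ssubset_of_ne hne)
  have hδ : 0 < infDist p E := (hE.isClosed.notMem_iff_infDist_pos hEne).mp hpE
  set r : ℝ := infDist p E / 2 with hr
  have hrpos : 0 < r := by positivity
  set N : Set X := D ∩ {z | infDist z E ≤ r} with hN
  have hNclosed : IsClosed N :=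
    (hD.isClosed.inter (isClosed_le (continuous_infDist_pt E) continuous_const))
  have hNcomp : IsCompact N := hD.inter_right
    (isClosed_le (continuous_infDist_pt E) continuous_const)
  have hEN : E ⊆ N := fun z hz =>
    ⟨hsub hz, by simp only [mem_setOf_eq, infDist_zero_of_mem hz]; positivity⟩
  have hxN : x ∈ N := hEN hx
  have hpN : p ∉ N := by
    rintro ⟨-, hp2⟩
    simp only [mem_setOf_eq, hr] at hp2
    linarith
  set M : Set X := connectedComponentIn N x with hM
  have hMconn : IsConnected M := isConnected_connectedComponentIn_iff.mpr hxN
  have hxM : x ∈ M := mem_connectedComponentIn hxN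
  have hEM : E ⊆ M := hEc.subset_connectedComponentIn hx hEN
  have hMN : M ⊆ N := connectedComponentIn_subset N x
  haveI : CompactSpace N := isCompact_iff_compactSpace.mp hNcomp
  have hMimage : M = Subtype.val '' connectedComponent (⟨x, hxN⟩ : N) :=
    connectedComponentIn_eq_image hxN
  have hMcomp : IsCompact M := by
    rw [hMimage]
    exact (isClosed_connectedComponent.isCompact).image continuous_subtype_val
  have hMD : M ⊆ D := fun z hz => (hMN hz).1
  have hMneD : M ≠ D := fun h => hpN (hMN (h ▸ hpD))
  have hkey : ∃ z ∈ M, infDist z E = r := by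
    by_contra hcon
    push_neg at hcon
    set S : Set X := D ∩ {z | infDist z E = r} with hS
    have hSclosed : IsClosed S :=
      hD.isClosed.inter (isClosed_eq (continuous_infDist_pt E) continuous_const)
    have hS0closed : IsClosed (Subtype.val ⁻¹' S : Set N) :=
      hSclosed.preimage continuous_subtype_val
    have hinter : (Subtype.val ⁻¹' S : Set N) ∩
        ⋂ Z : { Z : Set N // IsClopen Z ∧ (⟨x, hxN⟩ : N) ∈ Z }, (Z : Set N) = ∅ := by
      rw [← connectedComponent_eq_iInter_isClopen, eq_empty_iff_forall_notMem]
      rintro w ⟨hw1, hw2⟩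
      have hwM : (w : X) ∈ M := by
        rw [hMimage]; exact ⟨w, hw2, rfl⟩
      exact hcon _ hwM hw1.2
    haveI : Nonempty { Z : Set N // IsClopen Z ∧ (⟨x, hxN⟩ : N) ∈ Z } :=
      ⟨⟨univ, isClopen_univ, trivial⟩⟩
    obtain ⟨Z, hZ⟩ := IsCompact.elim_directed_family_closed
      (hS0closed.isCompact) _ (fun Z => Z.2.1.1) hinter
      (fun Z W => ⟨⟨Z.1 ∩ W.1, Z.2.1.inter W.2.1, ⟨Z.2.2, W.2.2⟩⟩,
        inter_subset_left, inter_subset_right⟩)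
    set A : Set X := Subtype.val '' (Z : Set N) with hA
    have hxA : x ∈ A := ⟨⟨x, hxN⟩, Z.2.2, rfl⟩
    have hAN : A ⊆ N := by rintro z ⟨w, -, rfl⟩; exact w.2
    have hAS : ∀ z ∈ A, z ∉ S := by
      rintro z ⟨w, hw, rfl⟩ hzS
      exact eq_empty_iff_forall_notMem.mp hZ w ⟨hzS, hw⟩
    have hAclosed : IsClosed A := (Z.2.1.1.isCompact.image continuous_subtype_val).isClosed
    obtain ⟨O, hOopen, hOeq⟩ := isOpen_induced_iff.mp Z.2.1.2
    have hAeq1 : A = O ∩ N := by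
      rw [hA, ← hOeq, Subtype.image_preimage_coe, inter_comm]
    have hAlt : ∀ z ∈ A, infDist z E < r := by
      intro z hz
      have hle : infDist z E ≤ r := (hAN hz).2
      rcases lt_or_eq_of_le hle with h | h
      · exact h
      · exact absurd ⟨(hAN hz).1, h⟩ (hAS z hz)
    set W : Set X := {z | infDist z E < r} with hW
    have hWopen : IsOpen W := isOpen_lt (continuous_infDist_pt E) continuous_const
    have hAeq2 : A = (O ∩ W) ∩ D := by
      apply Subset.antisymm
      · intro z hz
        have h1 : z ∈ O ∩ N := hAeq1 ▸ hz
        exact ⟨⟨h1.1, hAlt z hz⟩, h1.2.1⟩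
      · rintro z ⟨⟨hzO, hzW⟩, hzD⟩
        rw [hAeq1]
        exact ⟨hzO, hzD, show infDist z E ≤ r from le_of_lt hzW⟩
    obtain ⟨y, hyD, hy1, hy2⟩ := hDc (O ∩ W) Aᶜ (hOopen.inter hWopen) hAclosed.isOpen_compl
      (by
        intro z hz
        by_cases h : z ∈ A
        · exact Or.inl (hAeq2 ▸ h : z ∈ (O ∩ W) ∩ D).1
        · exact Or.inr h)
      ⟨x, hsub hx, (hAeq2 ▸ hxA : x ∈ (O ∩ W) ∩ D).1⟩
      ⟨p, hpD, fun h => hpN (hAN h)⟩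
    exact hy2 (by rw [hAeq2]; exact ⟨hy1, hyD⟩)
  obtain ⟨z, hzM, hzr⟩ := hkey
  have hzE : z ∉ E := fun h => by
    rw [infDist_zero_of_mem h] at hzr; linarith
  exact ⟨M, hMcomp, hMconn, hxM, hEM, fun h => hzE (h ▸ hzM), hMD, hMneD⟩

lemma topology_eq_preorder_topology {α : Type*} [LinearOrder α] [tα : TopologicalSpace α]
    [CompactSpace α]
    (hIoi : ∀ a : α, IsOpen (Ioi a)) (hIio : ∀ a : α, IsOpen (Iio a)) :
    tα = Preorder.topology α := by
  have h1 : tα ≤ Preorder.topology α := by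
    rw [Preorder.topology]
    refine TopologicalSpace.le_generateFrom_iff_subset_isOpen.mpr ?_
    rintro U ⟨a, (rfl | rfl)⟩
    exacts [hIoi a, hIio a]
  haveI hot : @OrderTopology α (Preorder.topology α) _ :=
    @OrderTopology.mk α (Preorder.topology α) _ rfl
  haveI ht2 : @T2Space α (Preorder.topology α) :=
    @OrderClosedTopology.to_t2Space α (Preorder.topology α) _
      (@OrderTopology.to_orderClosedTopology α (Preorder.topology α) _ hot)
  have hcont : @Continuous α α tα (Preorder.topology α) id := continuous_id_iff_le.mpr h1
  let h : @Homeomorph α α tα (Preorder.topology α) :=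
    @Continuous.homeoOfEquivCompactToT2 α α tα (Preorder.topology α) _ ht2 (Equiv.refl α) hcont
  have h2 : Preorder.topology α ≤ tα := by
    refine continuous_id_iff_le.mp ?_
    exact (@Homeomorph.continuous_symm α α tα (Preorder.topology α) h : _)
  exact le_antisymm h1 h2

end AuxChain

/-- In a nondegenerate hereditarily indecomposable metric continuum, the family `𝒞ₓ` of
subcontinua containing a fixed point `x` is a chain, closed in `C(X)`, its subspace
topology is the order topology of inclusion, and it is order-isomorphic and homeomorphic
to the unit interval. -/
theorem chain_of_subcontinua_through_point
    (X : Type*) [MetricSpace X] [CompactSpace X] [ConnectedSpace X] [Nontrivial X]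
    (hX : HereditarilyIndecomposable X) (x : X) :
    (∀ C D : SubcontinuaHyp X, x ∈ (C.1 : Set X) → x ∈ (D.1 : Set X) →
        (C.1 : Set X) ⊆ (D.1 : Set X) ∨ (D.1 : Set X) ⊆ (C.1 : Set X)) ∧
    IsClosed {C : SubcontinuaHyp X | x ∈ (C.1 : Set X)} ∧
    ((inferInstance : TopologicalSpace {C : SubcontinuaHyp X // x ∈ (C.1 : Set X)}) =
      TopologicalSpace.generateFrom
        ({U | ∃ a : {C : SubcontinuaHyp X // x ∈ (C.1 : Set X)},
            U = {c | (a.1.1 : Set X) ⊂ (c.1.1 : Set X)}} ∪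
         {U | ∃ a : {C : SubcontinuaHyp X // x ∈ (C.1 : Set X)},
            U = {c | (c.1.1 : Set X) ⊂ (a.1.1 : Set X)}})) ∧
    ∃ e : {C : SubcontinuaHyp X // x ∈ (C.1 : Set X)} ≃ₜ unitInterval,
      ∀ a b : {C : SubcontinuaHyp X // x ∈ (C.1 : Set X)},
        (a.1.1 : Set X) ⊆ (b.1.1 : Set X) ↔ e a ≤ e b := by
  classical
  open Metric TopologicalSpace in
  -- Part 1 : the family is a chain
  have part1 : ∀ C D : SubcontinuaHyp X, x ∈ (C.1 : Set X) → x ∈ (D.1 : Set X) →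
      (C.1 : Set X) ⊆ (D.1 : Set X) ∨ (D.1 : Set X) ⊆ (C.1 : Set X) := by
    intro C D hC hD
    exact hX _ _ C.1.isCompact C.2 D.1.isCompact D.2 ⟨x, hC, hD⟩
  -- Part 2 : closedness
  have part2 : IsClosed {C : SubcontinuaHyp X | x ∈ (C.1 : Set X)} := by
    have h1 : IsClosed {C : NonemptyCompacts X | ({x} : Set X) ⊆ (C : Set X)} :=
      myIsClosed_superset {x}
    have h2 : {C : SubcontinuaHyp X | x ∈ (C.1 : Set X)} =
        Subtype.val ⁻¹' {C : NonemptyCompacts X | ({x} : Set X) ⊆ (C : Set X)} := by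
      ext C; simp [singleton_subset_iff]
    rw [h2]
    exact h1.preimage continuous_subtype_val
  refine ⟨part1, part2, ?_⟩
  -- Compactness of the chain
  haveI hcompSub : CompactSpace (SubcontinuaHyp X) :=
    isCompact_iff_compactSpace.mp myIsClosed_connected.isCompact
  haveI hcompK : CompactSpace {C : SubcontinuaHyp X // x ∈ (C.1 : Set X)} :=
    isCompact_iff_compactSpace.mp part2.isCompact
  -- a linear order on the chain
  letI linK : LinearOrder {C : SubcontinuaHyp X // x ∈ (C.1 : Set X)} :=
    { le := fun a b => (a.1.1 : Set X) ⊆ (b.1.1 : Set X)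
      lt := fun a b => (a.1.1 : Set X) ⊂ (b.1.1 : Set X)
      le_refl := fun a => subset_rfl
      le_trans := fun a b c h1 h2 => h1.trans h2
      lt_iff_le_not_ge := fun a b => ssubset_iff_subset_not_subset
      le_antisymm := fun a b h1 h2 =>
        Subtype.ext (Subtype.ext (NonemptyCompacts.ext (subset_antisymm h1 h2)))
      le_total := fun a b => part1 a.1 b.1 a.2 b.2
      toDecidableLE := fun a b => Classical.propDecidable _ }
  -- subbasic order sets are open
  have hρcont : Continuous (fun c : {C : SubcontinuaHyp X // x ∈ (C.1 : Set X)} =>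
      (c.1.1 : NonemptyCompacts X)) := continuous_subtype_val.comp continuous_subtype_val
  have hle_closed : ∀ a : {C : SubcontinuaHyp X // x ∈ (C.1 : Set X)},
      IsClosed {c : {C : SubcontinuaHyp X // x ∈ (C.1 : Set X)} |
        (c.1.1 : Set X) ⊆ (a.1.1 : Set X)} := fun a =>
    (myIsClosed_subset a.1.1.isCompact.isClosed).preimage hρcont
  have hge_closed : ∀ a : {C : SubcontinuaHyp X // x ∈ (C.1 : Set X)},
      IsClosed {c : {C : SubcontinuaHyp X // x ∈ (C.1 : Set X)} |
        (a.1.1 : Set X) ⊆ (c.1.1 : Set X)} := fun a =>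
    (myIsClosed_superset (a.1.1 : Set X)).preimage hρcont
  have hIoiOpen : ∀ a : {C : SubcontinuaHyp X // x ∈ (C.1 : Set X)}, IsOpen (Ioi a) := by
    intro a
    have h1 : Ioi a = {c : {C : SubcontinuaHyp X // x ∈ (C.1 : Set X)} |
        (c.1.1 : Set X) ⊆ (a.1.1 : Set X)}ᶜ := by
      ext c
      simp only [mem_Ioi, mem_compl_iff, mem_setOf_eq]
      constructor
      · intro h hc
        exact ((ssubset_iff_subset_not_subset (α := Set X)).mp h).2 hc
      · intro h
        rcases part1 a.1 c.1 a.2 c.2 with h1 | h1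
        · exact (ssubset_iff_subset_not_subset (α := Set X)).mpr ⟨h1, h⟩
        · exact absurd h1 h
    rw [h1]
    exact (hle_closed a).isOpen_compl
  have hIioOpen : ∀ a : {C : SubcontinuaHyp X // x ∈ (C.1 : Set X)}, IsOpen (Iio a) := by
    intro a
    have h1 : Iio a = {c : {C : SubcontinuaHyp X // x ∈ (C.1 : Set X)} |
        (a.1.1 : Set X) ⊆ (c.1.1 : Set X)}ᶜ := by
      ext c
      simp only [mem_Iio, mem_compl_iff, mem_setOf_eq]
      constructor
      · intro h hc
        exact ((ssubset_iff_subset_not_subset (α := Set X)).mp h).2 hc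
      · intro h
        rcases part1 a.1 c.1 a.2 c.2 with h1 | h1
        · exact absurd h1 h
        · exact (ssubset_iff_subset_not_subset (α := Set X)).mpr ⟨h1, h⟩
    rw [h1]
    exact (hge_closed a).isOpen_compl
  have htopeq : (inferInstance :
        TopologicalSpace {C : SubcontinuaHyp X // x ∈ (C.1 : Set X)}) =
      Preorder.topology {C : SubcontinuaHyp X // x ∈ (C.1 : Set X)} :=
    topology_eq_preorder_topology hIoiOpen hIioOpen
  have hgen : Preorder.topology {C : SubcontinuaHyp X // x ∈ (C.1 : Set X)} =
      TopologicalSpace.generateFrom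
        ({U | ∃ a : {C : SubcontinuaHyp X // x ∈ (C.1 : Set X)},
            U = {c | (a.1.1 : Set X) ⊂ (c.1.1 : Set X)}} ∪
         {U | ∃ a : {C : SubcontinuaHyp X // x ∈ (C.1 : Set X)},
            U = {c | (c.1.1 : Set X) ⊂ (a.1.1 : Set X)}}) := by
    rw [Preorder.topology]
    congr 1
    ext U
    simp only [mem_union, mem_setOf_eq]
    constructor
    · rintro ⟨a, (rfl | rfl)⟩
      · exact Or.inl ⟨a, rfl⟩
      · exact Or.inr ⟨a, rfl⟩
    · rintro (⟨a, rfl⟩ | ⟨a, rfl⟩)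
      · exact ⟨a, Or.inl rfl⟩
      · exact ⟨a, Or.inr rfl⟩
  refine ⟨htopeq.trans hgen, ?_⟩
  -- Part 4 : the homeomorphism with the unit interval
  haveI : Nonempty X := ⟨x⟩
  set u : ℕ → X := TopologicalSpace.denseSeq X with hudef
  have hu : DenseRange u := TopologicalSpace.denseRange_denseSeq X
  set bC : NonemptyCompacts X := ⟨⟨{x}, isCompact_singleton⟩, singleton_nonempty x⟩ with hbC
  have hbCconn : IsConnected (bC : Set X) := isConnected_singleton
  set bot : {C : SubcontinuaHyp X // x ∈ (C.1 : Set X)} :=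
    ⟨⟨bC, hbCconn⟩, mem_singleton x⟩ with hbot
  set tC : NonemptyCompacts X := ⟨⟨univ, isCompact_univ⟩, univ_nonempty⟩ with htC
  have htCconn : IsConnected (tC : Set X) := isConnected_univ
  set top : {C : SubcontinuaHyp X // x ∈ (C.1 : Set X)} :=
    ⟨⟨tC, htCconn⟩, mem_univ x⟩ with htop
  set gx : ℝ := gfun u bC with hgx
  have hmono : ∀ a b : {C : SubcontinuaHyp X // x ∈ (C.1 : Set X)},
      (a.1.1 : Set X) ⊆ (b.1.1 : Set X) →
      gx - gfun u a.1.1 ≤ gx - gfun u b.1.1 := fun a b hab => by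
    have := gfun_antitone u hab; linarith
  have hstrict : ∀ a b : {C : SubcontinuaHyp X // x ∈ (C.1 : Set X)},
      (a.1.1 : Set X) ⊂ (b.1.1 : Set X) →
      gx - gfun u a.1.1 < gx - gfun u b.1.1 := fun a b hab => by
    have := gfun_strict_anti u hu hab; linarith
  have hnonneg : ∀ a : {C : SubcontinuaHyp X // x ∈ (C.1 : Set X)},
      0 ≤ gx - gfun u a.1.1 := fun a => by
    have h1 : (bC : Set X) ⊆ (a.1.1 : Set X) := singleton_subset_iff.mpr a.2
    have := gfun_antitone u h1
    rw [hgx]; linarith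
  have hbt : (bC : Set X) ⊂ (tC : Set X) := by
    show ({x} : Set X) ⊂ (univ : Set X)
    rw [ssubset_univ_iff]
    intro hcontr
    obtain ⟨y, hy⟩ := exists_ne x
    exact hy (mem_singleton_iff.mp (hcontr ▸ mem_univ y))
  have hT : 0 < gx - gfun u tC := by
    have := gfun_strict_anti u hu hbt
    rw [hgx]; linarith
  have hcont : Continuous (fun C : {C : SubcontinuaHyp X // x ∈ (C.1 : Set X)} =>
      gx - gfun u C.1.1) := continuous_const.sub ((gfun_continuous u).comp hρcont)
  -- surjectivity of the size functional onto [0, T]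
  have hsurj : ∀ v : ℝ, 0 ≤ v → v ≤ gx - gfun u tC →
      ∃ C : {C : SubcontinuaHyp X // x ∈ (C.1 : Set X)}, gx - gfun u C.1.1 = v := by
    intro v hv0 hvT
    by_cases hmem : ∃ C : {C : SubcontinuaHyp X // x ∈ (C.1 : Set X)},
      gx - gfun u C.1.1 = v
    · exact hmem
    exfalso
    push_neg at hmem
    have hLclosed : IsClosed {C : {C : SubcontinuaHyp X // x ∈ (C.1 : Set X)} |
        gx - gfun u C.1.1 ≤ v} := isClosed_le hcont continuous_const
    have hLne : {C : {C : SubcontinuaHyp X // x ∈ (C.1 : Set X)} |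
        gx - gfun u C.1.1 ≤ v}.Nonempty := by
      refine ⟨bot, ?_⟩
      show gx - gfun u bC ≤ v
      rw [hgx, sub_self]
      exact hv0
    obtain ⟨E, hEL, hEmax⟩ := hLclosed.isCompact.exists_isMaxOn hLne hcont.continuousOn
    have hUclosed : IsClosed {C : {C : SubcontinuaHyp X // x ∈ (C.1 : Set X)} |
        v ≤ gx - gfun u C.1.1} := isClosed_le continuous_const hcont
    have hUne : {C : {C : SubcontinuaHyp X // x ∈ (C.1 : Set X)} |
        v ≤ gx - gfun u C.1.1}.Nonempty := ⟨top, hvT⟩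
    obtain ⟨D, hDU, hDmin⟩ := hUclosed.isCompact.exists_isMinOn hUne hcont.continuousOn
    have hEv : gx - gfun u E.1.1 < v := lt_of_le_of_ne hEL (hmem E)
    have hDv : v < gx - gfun u D.1.1 := lt_of_le_of_ne hDU (fun h => hmem D h.symm)
    have hED : (E.1.1 : Set X) ⊆ (D.1.1 : Set X) := by
      rcases part1 E.1 D.1 E.2 D.2 with h | h
      · exact h
      · exfalso
        linarith [hmono D E h]
    have hEDne : (E.1.1 : Set X) ≠ (D.1.1 : Set X) := by
      intro hh
      have h1 : E.1.1 = D.1.1 := NonemptyCompacts.ext hh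
      rw [h1] at hEv
      linarith
    obtain ⟨M, hMcomp, hMconn, hxM, hEM2, hMneE, hMD2, hMneD2⟩ :=
      exists_mid D.1.1.isCompact D.1.2.isPreconnected E.1.1.isCompact E.1.2.isPreconnected
        E.1.1.nonempty hED hEDne E.2
    set CM : {C : SubcontinuaHyp X // x ∈ (C.1 : Set X)} :=
      ⟨⟨⟨⟨M, hMcomp⟩, hMconn.nonempty⟩, hMconn⟩, hxM⟩ with hCM
    have h1 : gx - gfun u E.1.1 < gx - gfun u CM.1.1 :=
      hstrict E CM (hEM2.ssubset_of_ne (Ne.symm hMneE))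
    have h2 : gx - gfun u CM.1.1 < gx - gfun u D.1.1 :=
      hstrict CM D (hMD2.ssubset_of_ne hMneD2)
    rcases le_or_gt (gx - gfun u CM.1.1) v with hc | hc
    · have h3 := hEmax (show CM ∈ {C : {C : SubcontinuaHyp X // x ∈ (C.1 : Set X)} |
        gx - gfun u C.1.1 ≤ v} from hc)
      simp only [mem_setOf_eq] at h3
      linarith
    · have h3 := hDmin (show CM ∈ {C : {C : SubcontinuaHyp X // x ∈ (C.1 : Set X)} |
        v ≤ gx - gfun u C.1.1} from le_of_lt hc)
      simp only [mem_setOf_eq] at h3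
      linarith
  -- the map to the unit interval
  have hψ : ∀ C : {C : SubcontinuaHyp X // x ∈ (C.1 : Set X)},
      gx - gfun u C.1.1 ≤ gx - gfun u tC := fun C => by
    have h1 : (C.1.1 : Set X) ⊆ (tC : Set X) := subset_univ _
    have := gfun_antitone u h1
    linarith
  let φ : {C : SubcontinuaHyp X // x ∈ (C.1 : Set X)} → unitInterval := fun C =>
    ⟨(gx - gfun u C.1.1) / (gx - gfun u tC),
      div_nonneg (hnonneg C) hT.le, (div_le_one hT).mpr (hψ C)⟩
  have hφval : ∀ C, (φ C : ℝ) = (gx - gfun u C.1.1) / (gx - gfun u tC) := fun C => rfl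
  have hφbij : Function.Bijective φ := by
    constructor
    · intro a b hab
      have h1 : (gx - gfun u a.1.1) / (gx - gfun u tC)
          = (gx - gfun u b.1.1) / (gx - gfun u tC) := congrArg Subtype.val hab
      rw [div_eq_div_iff hT.ne' hT.ne'] at h1
      have h2 : gx - gfun u a.1.1 = gx - gfun u b.1.1 := mul_right_cancel₀ hT.ne' h1
      by_contra hne
      have hsets : (a.1.1 : Set X) ≠ (b.1.1 : Set X) := fun hh =>
        hne (Subtype.ext (Subtype.ext (NonemptyCompacts.ext hh)))
      rcases part1 a.1 b.1 a.2 b.2 with h | h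
      · exact absurd h2 (ne_of_lt (hstrict a b (h.ssubset_of_ne hsets)))
      · exact absurd h2.symm (ne_of_lt (hstrict b a (h.ssubset_of_ne (Ne.symm hsets))))
    · rintro ⟨t, ht0, ht1⟩
      obtain ⟨C, hC⟩ := hsurj (t * (gx - gfun u tC)) (mul_nonneg ht0 hT.le)
        (by nlinarith)
      refine ⟨C, Subtype.ext ?_⟩
      rw [hφval, hC]
      field_simp
  have hφcont : Continuous φ := (hcont.div_const _).subtype_mk _
  let eq : {C : SubcontinuaHyp X // x ∈ (C.1 : Set X)} ≃ unitInterval :=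
    Equiv.ofBijective φ hφbij
  have heqcont : Continuous eq := hφcont
  refine ⟨heqcont.homeoOfEquivCompactToT2, fun a b => ?_⟩
  have hval : ((φ a : ℝ) ≤ (φ b : ℝ)) ↔ ((a.1.1 : Set X) ⊆ (b.1.1 : Set X)) := by
    constructor
    · intro hle
      by_contra hnab
      have h1 : (b.1.1 : Set X) ⊆ (a.1.1 : Set X) :=
        (part1 a.1 b.1 a.2 b.2).resolve_left hnab
      have h2 : (b.1.1 : Set X) ≠ (a.1.1 : Set X) := fun hh => hnab hh.symm.subset
      have h3 := hstrict b a (h1.ssubset_of_ne h2)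
      rw [hφval, hφval, div_le_div_iff₀ hT hT] at hle
      have h4 : gx - gfun u a.1.1 ≤ gx - gfun u b.1.1 := le_of_mul_le_mul_right hle hT
      linarith
    · intro hab
      rw [hφval, hφval, div_le_div_iff₀ hT hT]
      have := hmono a b hab
      nlinarith
  have h5 : (heqcont.homeoOfEquivCompactToT2 a ≤ heqcont.homeoOfEquivCompactToT2 b)
      ↔ ((φ a : ℝ) ≤ (φ b : ℝ)) :=
    ⟨fun hle => Subtype.coe_le_coe.mpr hle, fun hle => Subtype.coe_le_coe.mp hle⟩
  rw [h5]
  exact hval.symm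
end

section
/- If a normal space X has an essential family consisting of n pairs of disjoint closed sets, then the family of n pairs of opposite faces of the cube [0,1]^n is essential in [0,1]^n. -/
open Set

/-- A family of pairs of disjoint closed sets is *essential* if every choice of
partitions between the pairs has nonempty intersection. -/
def IsEssentialFamily {X : Type*} [TopologicalSpace X] {I : Type*} (A B : I → Set X) : Prop :=
  (∀ i, IsClosed (A i)) ∧ (∀ i, IsClosed (B i)) ∧ (∀ i, Disjoint (A i) (B i)) ∧
    ∀ L : I → Set X, (∀ i, IsPartitionBetween (L i) (A i) (B i)) → (⋂ i, L i).Nonempty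

/-- If a normal space has an essential family of `n` pairs, then the `n` pairs of
opposite faces of the cube `[0,1]^n` form an essential family. -/
theorem cube_faces_essential_of_essential_family
    {X : Type*} [TopologicalSpace X] [NormalSpace X] {n : ℕ}
    (C D : Fin n → Set X) (h : IsEssentialFamily C D) :
    IsEssentialFamily (fun i : Fin n => {x : Fin n → unitInterval | x i = 0})
      (fun i : Fin n => {x : Fin n → unitInterval | x i = 1}) := by
  obtain ⟨hC, hD, hCD, hess⟩ := h
  refine ⟨?_, ?_, ?_, ?_⟩
  · intro i
    exact IsClosed.preimage (continuous_apply i) isClosed_singleton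
  · intro i
    exact IsClosed.preimage (continuous_apply i) isClosed_singleton
  · intro i
    rw [Set.disjoint_left]
    intro x hx0 hx1
    simp only [mem_setOf_eq] at hx0 hx1
    rw [hx0] at hx1
    exact zero_ne_one hx1
  · intro L hL
    choose f hf0 hf1 hfI using fun i =>
      exists_continuous_zero_one_of_isClosed (hC i) (hD i) (hCD i)
    set F : X → (Fin n → unitInterval) := fun x i => ⟨f i x, hfI i x⟩ with hF
    have hFc : Continuous F :=
      continuous_pi fun i => Continuous.subtype_mk (f i).continuous _
    have hpart : ∀ i, IsPartitionBetween (F ⁻¹' (L i)) (C i) (D i) := by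
      intro i
      obtain ⟨hLc, U, V, hU, hV, hUV, hAU, hBV, hcomp⟩ := hL i
      refine ⟨hLc.preimage hFc, F ⁻¹' U, F ⁻¹' V, hU.preimage hFc, hV.preimage hFc,
        hUV.preimage F, ?_, ?_, ?_⟩
      · intro x hx
        apply hAU
        show F x i = 0
        exact Subtype.ext (hf0 i hx)
      · intro x hx
        apply hBV
        show F x i = 1
        exact Subtype.ext (hf1 i hx)
      · rw [← preimage_compl, hcomp, preimage_union]
    obtain ⟨x, hx⟩ := hess _ hpart
    refine ⟨F x, ?_⟩
    simp only [mem_iInter, mem_preimage] at hx ⊢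
    exact hx
end
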